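/- arXiv:1807.02806 — 3 statements merged into one kernel-verified Lean document; each statement's English description precedes it below -/
import Mathlib

section
/- For a signed permutation group B_n (bijections σ of {±1,...,±n} with σ(-i)=-σ(i)), let B^+(n,s,r) denote the number of σ ∈ B_n with σ(n) > 0, σ(1) = s, and exactly r type-B descents (where des_B(σ) = |{i ∈ [0,n-1] : σ_i > σ_{i+1}}| with σ_0 = 0). Then for all 1 ≤ s ≤ n and 0 ≤ r ≤ n-1, B^+(n,s,r) = B^+(n,n-s+1,n-r-1). -/
open Finset Polynomial

/-- A signed permutation in the hyperoctahedral group `B_n`: a bijection of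
`{±1,…,±n}` with `σ(-i) = -σ(i)`, encoded by its values on `1,…,n`
(extended by `0` elsewhere). -/
structure SignedPerm (n : ℕ) where
  toFun : ℕ → ℤ
  mem_abs : ∀ i ∈ Finset.Icc 1 n, (toFun i).natAbs ∈ Finset.Icc 1 n
  inj_abs : ∀ i ∈ Finset.Icc 1 n, ∀ j ∈ Finset.Icc 1 n,
      (toFun i).natAbs = (toFun j).natAbs → i = j
  eq_zero : ∀ i, i ∉ Finset.Icc 1 n → toFun i = 0

/-- The extended word `σ_0 σ_1 ⋯ σ_n σ_{n+1}` with `σ_0 = 0` and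
`σ_{n+1} = -∞` (modeled by `-(n+1)`, which is smaller than every entry). -/
def word {n : ℕ} (σ : SignedPerm n) (i : ℕ) : ℤ :=
  if i ≤ n then σ.toFun i else -(n + 1 : ℤ)

/-- The number of type-B descents: `|{i ∈ [0,n-1] : σ_i > σ_{i+1}}|`, `σ_0 = 0`. -/
def desB {n : ℕ} (σ : SignedPerm n) : ℕ :=
  ((Finset.range n).filter (fun i => word σ (i + 1) < word σ i)).card

/-- `a` is the starting position of a slide of `σ`, i.e. of a maximal
decreasing run of length at least 2 in the extended word. -/
def IsSlideStart {n : ℕ} (σ : SignedPerm n) (a : ℕ) : Prop :=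
  a ≤ n ∧ (a = 0 ∨ word σ (a - 1) < word σ a) ∧ word σ (a + 1) < word σ a

/-- The number of slides of `σ` (maximal decreasing runs of length ≥ 2 in the
extended word), counted via their starting positions. -/
def slides {n : ℕ} (σ : SignedPerm n) : ℕ :=
  ((Finset.range (n + 1)).filter (fun a =>
      (a = 0 ∨ word σ (a - 1) < word σ a) ∧ word σ (a + 1) < word σ a)).card

/-- `B^+(n,j,r)`: the number of `σ ∈ B_n` with `σ_n > 0`, `σ_1 = j` and
exactly `r` type-B descents (`j`, `r` integers; the count is `0` for `r < 0`). -/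
noncomputable def BP (n : ℕ) (j r : ℤ) : ℕ :=
  Nat.card {σ : SignedPerm n // 0 < σ.toFun n ∧ σ.toFun 1 = j ∧ (desB σ : ℤ) = r}

/-- `B^{++}(n,k)`: number of `σ ∈ B_n` with `σ_1 > 0`, `σ_n > 0`, `k` descents. -/
noncomputable def BPP (n k : ℕ) : ℕ :=
  Nat.card {σ : SignedPerm n // 0 < σ.toFun 1 ∧ 0 < σ.toFun n ∧ desB σ = k}

/-- `B^{-+}(n,k)`: number of `σ ∈ B_n` with `σ_1 < 0`, `σ_n > 0`, `k` descents. -/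
noncomputable def BMP (n k : ℕ) : ℕ :=
  Nat.card {σ : SignedPerm n // σ.toFun 1 < 0 ∧ 0 < σ.toFun n ∧ desB σ = k}

/-- `b^{++}(n,k,s)`: number of `σ ∈ B_n` with `σ_1 > 0`, `σ_n > 0`,
`k` descents and `s+1` slides. -/
noncomputable def bPP (n k s : ℕ) : ℕ :=
  Nat.card {σ : SignedPerm n //
    0 < σ.toFun 1 ∧ 0 < σ.toFun n ∧ desB σ = k ∧ slides σ = s + 1}

/-- `b^{-+}(n,k,s)`: number of `σ ∈ B_n` with `σ_1 < 0`, `σ_n > 0`,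
`k` descents and `s+1` slides. -/
noncomputable def bMP (n k s : ℕ) : ℕ :=
  Nat.card {σ : SignedPerm n //
    σ.toFun 1 < 0 ∧ 0 < σ.toFun n ∧ desB σ = k ∧ slides σ = s + 1}

/-- Number of `σ ∈ B_n` with `σ_n > 0` and `k` descents. -/
noncomputable def BplusCount (n k : ℕ) : ℕ :=
  Nat.card {σ : SignedPerm n // 0 < σ.toFun n ∧ desB σ = k}

/-- Number of `σ ∈ B_n` with `k` descents. -/
noncomputable def Ball (n k : ℕ) : ℕ := Nat.card {σ : SignedPerm n // desB σ = k}

/-- The `j`-Eulerian polynomial of type `B^+`: `B^+_{n,j}(t) = Σ_r B^+(n,j,r) t^r`. -/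
noncomputable def BPpoly (n : ℕ) (j : ℤ) : Polynomial ℤ :=
  ∑ r ∈ Finset.range (n + 1), Polynomial.C (BP n j (r : ℤ) : ℤ) * Polynomial.X ^ r

/-- The type-B Eulerian polynomial `B_n(t) = Σ_{σ ∈ B_n} t^{des_B σ}`. -/
noncomputable def Bfullpoly (n : ℕ) : Polynomial ℤ :=
  ∑ k ∈ Finset.range (n + 1), Polynomial.C (Ball n k : ℤ) * Polynomial.X ^ k

/-- The symmetrized `j`-Eulerian polynomial `𝔹^+_{n,j}(t)`. -/
noncomputable def BsymPoly (n j : ℕ) : Polynomial ℤ :=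
  if 2 * j = n + 1 then BPpoly n (j : ℤ)
  else BPpoly n (j : ℤ) + BPpoly n ((n : ℤ) + 1 - j)


/-- Sign-preserving complement on values: `x ↦ sign(x) · (n+1-|x|)`. -/
def gmap (n : ℕ) (x : ℤ) : ℤ :=
  if 0 < x then (n : ℤ) + 1 - x else if x < 0 then -((n : ℤ) + 1) - x else 0

lemma gmap_natAbs_mem {n : ℕ} {x : ℤ} (hx : x.natAbs ∈ Finset.Icc 1 n) :
    (gmap n x).natAbs ∈ Finset.Icc 1 n := by
  simp only [Finset.mem_Icc] at hx ⊢
  unfold gmap; split_ifs <;> omega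

lemma gmap_natAbs {n : ℕ} {x : ℤ} (h1 : 1 ≤ x.natAbs) (h2 : x.natAbs ≤ n) :
    (gmap n x).natAbs = n + 1 - x.natAbs := by
  unfold gmap; split_ifs <;> omega

lemma gmap_gmap {n : ℕ} {x : ℤ} (hx : x.natAbs ≤ n) : gmap n (gmap n x) = x := by
  unfold gmap; split_ifs <;> omega

lemma gmap_pos {n : ℕ} {x : ℤ} (hx : x.natAbs ≤ n) (h : 0 < x) : 0 < gmap n x := by
  unfold gmap; split_ifs <;> omega

/-- The complement of a signed permutation. -/
def compSP {n : ℕ} (σ : SignedPerm n) : SignedPerm n where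
  toFun i := gmap n (σ.toFun i)
  mem_abs i hi := gmap_natAbs_mem (σ.mem_abs i hi)
  inj_abs i hi j hj h := by
    have hi' := σ.mem_abs i hi
    have hj' := σ.mem_abs j hj
    simp only [Finset.mem_Icc] at hi' hj'
    refine σ.inj_abs i hi j hj ?_
    rw [gmap_natAbs hi'.1 hi'.2, gmap_natAbs hj'.1 hj'.2] at h
    omega
  eq_zero i hi := by
    show gmap n (σ.toFun i) = 0
    rw [σ.eq_zero i hi]; simp [gmap]

lemma SignedPerm.ext' {n : ℕ} {σ τ : SignedPerm n} (h : σ.toFun = τ.toFun) : σ = τ := by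
  cases σ; cases τ; cases h; rfl

lemma compSP_compSP {n : ℕ} (σ : SignedPerm n) : compSP (compSP σ) = σ := by
  apply SignedPerm.ext'; funext i
  show gmap n (gmap n (σ.toFun i)) = σ.toFun i
  by_cases hi : i ∈ Finset.Icc 1 n
  · exact gmap_gmap (Finset.mem_Icc.mp (σ.mem_abs i hi)).2
  · rw [σ.eq_zero i hi]; simp [gmap]

lemma key_pointwise (n : ℕ) (x y : ℤ) (hx : x.natAbs ∈ Finset.Icc 1 n)
    (hy : y.natAbs ∈ Finset.Icc 1 n) (hxy : x.natAbs ≠ y.natAbs) :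
    ((if gmap n y < gmap n x then (1 : ℤ) else 0) + if y < x then 1 else 0)
      = 1 + ((if 0 < x then (1 : ℤ) else 0) - if 0 < y then 1 else 0) := by
  simp only [Finset.mem_Icc] at hx hy
  unfold gmap; split_ifs <;> omega

lemma desB_cast {n : ℕ} (τ : SignedPerm n) :
    (desB τ : ℤ) = ∑ i ∈ Finset.range n,
      (if word τ (i + 1) < word τ i then (1 : ℤ) else 0) := by
  rw [desB, Finset.card_filter]
  push_cast
  rfl

lemma desB_add {n : ℕ} (σ : SignedPerm n) (h1 : 0 < σ.toFun 1)
    (hn : 0 < σ.toFun n) :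
    (desB (compSP σ) : ℤ) + (desB σ : ℤ) = (n : ℤ) - 1 := by
  rw [desB_cast, desB_cast, ← Finset.sum_add_distrib]
  have hzero : σ.toFun 0 = 0 := σ.eq_zero 0 (by simp)
  have hstep : ∀ i ∈ Finset.range n,
      ((if word (compSP σ) (i + 1) < word (compSP σ) i then (1 : ℤ) else 0)
        + if word σ (i + 1) < word σ i then 1 else 0)
      = 1 + ((if 0 < σ.toFun i then (1 : ℤ) else 0)
          - if 0 < σ.toFun (i + 1) then 1 else 0) := by
    intro i hi
    rw [Finset.mem_range] at hi
    have w1 : word (compSP σ) (i + 1) = gmap n (σ.toFun (i + 1)) := by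
      rw [word, if_pos (by omega)]; rfl
    have w2 : word (compSP σ) i = gmap n (σ.toFun i) := by
      rw [word, if_pos (by omega)]; rfl
    have w3 : word σ (i + 1) = σ.toFun (i + 1) := by rw [word, if_pos (by omega)]
    have w4 : word σ i = σ.toFun i := by rw [word, if_pos (by omega)]
    rw [w1, w2, w3, w4]
    rcases Nat.eq_zero_or_pos i with h0 | h0
    · subst h0
      have hm := σ.mem_abs 1 (by simp [Finset.mem_Icc]; omega)
      rw [Finset.mem_Icc] at hm
      have hg : 0 < gmap n (σ.toFun 1) := gmap_pos hm.2 h1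
      have hz0 : gmap n (σ.toFun 0) = 0 := by rw [hzero]; simp [gmap]
      simp only [Nat.zero_add]
      rw [hz0, hzero, if_neg (by omega), if_neg (by omega),
        if_neg (lt_irrefl 0), if_pos h1]
      norm_num
    · have hiI : i ∈ Finset.Icc 1 n := by rw [Finset.mem_Icc]; omega
      have hiI' : i + 1 ∈ Finset.Icc 1 n := by rw [Finset.mem_Icc]; omega
      refine key_pointwise n _ _ (σ.mem_abs i hiI) (σ.mem_abs (i + 1) hiI') ?_
      intro h
      exact absurd (σ.inj_abs i hiI (i + 1) hiI' h) (by omega)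
  rw [Finset.sum_congr rfl hstep, Finset.sum_add_distrib, Finset.sum_const,
    Finset.sum_range_sub' (f := fun i => if 0 < σ.toFun i then (1 : ℤ) else 0)]
  rw [hzero]
  rw [if_neg (lt_irrefl 0), if_pos hn]
  simp
  ring

lemma compSP_mem {n : ℕ} (σ : SignedPerm n) (j d : ℤ) (hj1 : 1 ≤ j) (hjn : j ≤ n)
    (h : 0 < σ.toFun n ∧ σ.toFun 1 = j ∧ (desB σ : ℤ) = d) :
    0 < (compSP σ).toFun n ∧ (compSP σ).toFun 1 = (n : ℤ) + 1 - j ∧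
      (desB (compSP σ) : ℤ) = (n : ℤ) - 1 - d := by
  obtain ⟨hn, h1, hd⟩ := h
  have hn1 : 1 ≤ n := by exact_mod_cast hj1.trans hjn
  have hm := σ.mem_abs n (by rw [Finset.mem_Icc]; omega)
  rw [Finset.mem_Icc] at hm
  have h1pos : 0 < σ.toFun 1 := by rw [h1]; omega
  refine ⟨gmap_pos hm.2 hn, ?_, ?_⟩
  · show gmap n (σ.toFun 1) = _
    rw [h1]; unfold gmap; rw [if_pos (by omega)]
  · have := desB_add σ h1pos hn
    omega

/-- `B^+(n,s,r) = B^+(n, n-s+1, n-r-1)` for `1 ≤ s ≤ n`, `0 ≤ r ≤ n-1`. -/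
theorem stmt0 (n s r : ℕ) (hs1 : 1 ≤ s) (hsn : s ≤ n) (hr : r ≤ n - 1) :
    BP n (s : ℤ) (r : ℤ) = BP n ((n : ℤ) - s + 1) ((n : ℤ) - r - 1) := by
  apply Nat.card_congr
  refine ⟨fun σ => ⟨compSP σ.1, ?_⟩, fun σ => ⟨compSP σ.1, ?_⟩,
    fun σ => Subtype.ext (compSP_compSP σ.1),
    fun σ => Subtype.ext (compSP_compSP σ.1)⟩
  · obtain ⟨h1, h2, h3⟩ := compSP_mem σ.1 (s : ℤ) (r : ℤ)
      (by exact_mod_cast hs1) (by exact_mod_cast hsn) σ.2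
    exact ⟨h1, h2.trans (by ring), h3.trans (by ring)⟩
  · obtain ⟨h1, h2, h3⟩ := compSP_mem σ.1 ((n : ℤ) - s + 1) ((n : ℤ) - r - 1)
      (by omega) (by omega) σ.2
    exact ⟨h1, h2.trans (by ring), h3.trans (by ring)⟩
end

section
/- For n ≥ 2, 1 ≤ s ≤ n, and 0 ≤ r ≤ n-1, the recurrence B^+(n,s,r) = Σ_{j=1}^{s-1} B^+(n-1,j,r-1) + Σ_{j=1}^{n-1} B^+(n-1,-j,r) + Σ_{j=s}^{n-1} B^+(n-1,j,r) holds, with initial conditions B^+(1,1,0) = 1 and B^+(1,-1,r) = 0 for all r. -/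
open Finset Polynomial

/-!
Deleting the first letter `σ_1 = s > 0` of `σ ∈ B_n` and standardizing the remaining letters
(those of absolute value above `s` move one step towards `0`) is a bijection onto `B_{n-1}` that
preserves the sign of the last letter and every descent at positions `≥ 2`. The descent `s > σ_2`
of `σ` becomes `τ_1 < s` for the standardized word `τ`: either the descent `0 > τ_1` of `τ`, or the
extra descent in the case `0 < τ_1 < s`. Sorting by the value `j = τ_1` gives the three sums.
-/

/-- For `1 ≤ s`, an order isomorphism from `ℤ` onto `ℤ \ {s, -s}`, with inverse `shiftIn s`. -/
def shiftOut (s v : ℤ) : ℤ := if s ≤ v then v + 1 else if v ≤ -s then v - 1 else v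

def shiftIn (s v : ℤ) : ℤ := if s < v then v - 1 else if v < -s then v + 1 else v

section Shift

variable {s : ℤ}

theorem shiftIn_shiftOut (v : ℤ) : shiftIn s (shiftOut s v) = v := by
  unfold shiftIn shiftOut; split_ifs <;> omega

theorem shiftOut_shiftIn (hs : 1 ≤ s) {v : ℤ} (hv : v.natAbs ≠ s.natAbs) :
    shiftOut s (shiftIn s v) = v := by
  unfold shiftIn shiftOut; split_ifs <;> omega

theorem shiftOut_zero (hs : 1 ≤ s) : shiftOut s 0 = 0 := by
  unfold shiftOut; split_ifs <;> omega

theorem shiftIn_zero (hs : 1 ≤ s) : shiftIn s 0 = 0 := by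
  unfold shiftIn; split_ifs <;> omega

theorem shiftOut_lt_shiftOut {a b : ℤ} : shiftOut s a < shiftOut s b ↔ a < b := by
  unfold shiftOut; split_ifs <;> omega

theorem shiftOut_lt_self_iff {v : ℤ} : shiftOut s v < s ↔ v < s := by
  unfold shiftOut; split_ifs <;> omega

theorem shiftOut_pos (hs : 1 ≤ s) {v : ℤ} : 0 < shiftOut s v ↔ 0 < v := by
  unfold shiftOut; split_ifs <;> omega

theorem natAbs_shiftOut_ne (hs : 1 ≤ s) (v : ℤ) : (shiftOut s v).natAbs ≠ s.natAbs := by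
  unfold shiftOut; split_ifs <;> omega

theorem natAbs_shiftOut_inj (hs : 1 ≤ s) {a b : ℤ} :
    (shiftOut s a).natAbs = (shiftOut s b).natAbs ↔ a.natAbs = b.natAbs := by
  unfold shiftOut; split_ifs <;> omega

theorem natAbs_shiftOut_mem_Icc (hs : 1 ≤ s) {m : ℕ} {v : ℤ} (hv : v.natAbs ∈ Icc 1 m) : (shiftOut s v).natAbs ∈ Icc 1 (m + 1) := by
  simp only [mem_Icc] at hv ⊢; unfold shiftOut; split_ifs <;> omega

theorem natAbs_shiftIn_mem_Icc (hs : 1 ≤ s) {m : ℕ} (hsm : s ≤ m + 1) {v : ℤ}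
    (hv : v.natAbs ∈ Icc 1 (m + 1)) (hvs : v.natAbs ≠ s.natAbs) : (shiftIn s v).natAbs ∈ Icc 1 m := by
  simp only [mem_Icc] at hv ⊢; unfold shiftIn; split_ifs <;> omega

end Shift

namespace SignedPerm

variable {n : ℕ}

@[ext]
theorem ext {σ τ : SignedPerm n} (h : σ.toFun = τ.toFun) : σ = τ := by
  cases σ; cases τ; congr

theorem ext_Icc {σ τ : SignedPerm n} (h : ∀ i ∈ Icc 1 n, σ.toFun i = τ.toFun i) : σ = τ := by
  refine ext (funext fun i => ?_)
  by_cases hi : i ∈ Icc 1 n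
  · exact h i hi
  · rw [σ.eq_zero i hi, τ.eq_zero i hi]

instance (n : ℕ) : Finite (SignedPerm n) := by
  have bound (σ : SignedPerm n) (i : Icc 1 n) : σ.toFun i ∈ Icc (-(n : ℤ)) n := by
    have := σ.mem_abs i i.2
    simp only [mem_Icc] at this ⊢
    omega
  exact Finite.of_injective (fun σ (i : Icc 1 n) => (⟨σ.toFun i, bound σ i⟩ : Icc (-(n : ℤ)) n))
    fun σ τ h => ext_Icc fun i hi => by simpa using congrFun h ⟨i, hi⟩

theorem natAbs_ne (σ : SignedPerm n) {i j : ℕ} (hi : i ∈ Icc 1 n) (hj : j ∈ Icc 1 n)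
    (hij : i ≠ j) : (σ.toFun i).natAbs ≠ (σ.toFun j).natAbs :=
  fun h => hij (σ.inj_abs i hi j hj h)

theorem toFun_ne_zero (σ : SignedPerm n) {i : ℕ} (hi : i ∈ Icc 1 n) : σ.toFun i ≠ 0 := by
  have := σ.mem_abs i hi
  simp only [mem_Icc] at this
  omega

theorem word_of_le (σ : SignedPerm n) {i : ℕ} (hi : i ≤ n) : word σ i = σ.toFun i := if_pos hi

theorem word_zero (σ : SignedPerm n) : word σ 0 = 0 :=
  (σ.word_of_le n.zero_le).trans (σ.eq_zero 0 (by simp))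

def empty : SignedPerm 0 := ⟨fun _ => 0, by simp, by simp, fun _ _ => rfl⟩

variable {m : ℕ}

def cons (s : ℤ) (hs : 1 ≤ s) (hsm : s ≤ m + 1) (τ : SignedPerm m) : SignedPerm (m + 1) where
  toFun
    | 0 => 0
    | 1 => s
    | i + 2 => shiftOut s (τ.toFun (i + 1))
  mem_abs := by
    rintro (_ | _ | i) hi
    · simp at hi
    · simp only [mem_Icc] at hsm ⊢; omega
    · exact natAbs_shiftOut_mem_Icc hs (τ.mem_abs _ (by simp only [mem_Icc] at hi ⊢; omega))
  inj_abs := by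
    rintro (_ | _ | i) hi (_ | _ | j) hj h
    all_goals simp only [mem_Icc] at hi hj
    all_goals first
      | omega
      | exact absurd h (natAbs_shiftOut_ne hs _)
      | exact absurd h.symm (natAbs_shiftOut_ne hs _)
      | skip
    have := τ.inj_abs _ (by simp only [mem_Icc]; omega) _ (by simp only [mem_Icc]; omega)
      ((natAbs_shiftOut_inj hs).1 h)
    omega
  eq_zero := by
    rintro (_ | _ | i) hi
    · rfl
    · simp at hi
    · show shiftOut s _ = 0
      rw [τ.eq_zero _ (by simp only [mem_Icc] at hi ⊢; omega), shiftOut_zero hs]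

def tail (σ : SignedPerm (m + 1)) (hs : 1 ≤ σ.toFun 1) : SignedPerm m where
  toFun
    | 0 => 0
    | i + 1 => shiftIn (σ.toFun 1) (σ.toFun (i + 2))
  mem_abs := by
    rintro (_ | i) hi
    · simp at hi
    · have h1 := σ.mem_abs 1 (by simp)
      simp only [mem_Icc] at hi h1
      exact natAbs_shiftIn_mem_Icc hs (by omega) (σ.mem_abs _ (by simp only [mem_Icc]; omega))
        (σ.natAbs_ne (by simp only [mem_Icc]; omega) (by simp) (by omega))
  inj_abs := by
    rintro (_ | i) hi (_ | j) hj h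
    all_goals simp only [mem_Icc] at hi hj
    all_goals first | omega | skip
    have hne (k : ℕ) (hk : k < m) := σ.natAbs_ne (i := k + 2) (j := 1)
      (by simp only [mem_Icc]; omega) (by simp) (by omega)
    have h' := (natAbs_shiftOut_inj hs).2 h
    rw [shiftOut_shiftIn hs (hne i (by omega)), shiftOut_shiftIn hs (hne j (by omega))] at h'
    have := σ.inj_abs _ (by simp only [mem_Icc]; omega) _ (by simp only [mem_Icc]; omega) h'
    omega
  eq_zero := by
    rintro (_ | i) hi
    · rfl
    · show shiftIn _ _ = 0
      rw [σ.eq_zero (i + 2) (by simp only [mem_Icc] at hi ⊢; omega), shiftIn_zero hs]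

def consEquiv (s : ℤ) (hs : 1 ≤ s) (hsm : s ≤ m + 1) :
    SignedPerm m ≃ {σ : SignedPerm (m + 1) // σ.toFun 1 = s} where
  toFun τ := ⟨cons s hs hsm τ, rfl⟩
  invFun σ := tail σ.1 (hs.trans σ.2.ge)
  left_inv τ := by
    ext (_ | i)
    · exact (τ.eq_zero 0 (by simp)).symm
    · exact shiftIn_shiftOut _
  right_inv := by
    rintro ⟨σ, rfl⟩
    refine Subtype.ext (ext (funext ?_))
    rintro (_ | _ | i)
    · exact (σ.eq_zero 0 (by simp)).symm
    · rfl
    · refine shiftOut_shiftIn hs ?_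
      by_cases hi : i + 2 ∈ Icc 1 (m + 1)
      · exact σ.natAbs_ne hi (by simp) (by omega)
      · rw [σ.eq_zero _ hi]; omega

variable {s : ℤ}

theorem cons_last_pos_iff (hs : 1 ≤ s) (hsm : s ≤ m + 1) (hm : 1 ≤ m) (τ : SignedPerm m) :
    0 < (cons s hs hsm τ).toFun (m + 1) ↔ 0 < τ.toFun m := by
  obtain ⟨k, rfl⟩ : ∃ k, m = k + 1 := ⟨m - 1, by omega⟩
  exact shiftOut_pos hs

theorem desB_cons (hs : 1 ≤ s) (hsm : s ≤ m + 1) (τ : SignedPerm m) :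
    desB (cons s hs hsm τ) = desB τ + if 0 < τ.toFun 1 ∧ τ.toFun 1 < s then 1 else 0 := by
  set σ := cons s hs hsm τ
  have no_first : ¬ word σ 1 < word σ 0 := by
    rw [word_zero, word_of_le σ (by omega)]
    exact not_lt.2 (by simp only [σ, cons]; omega)
  have step (i : ℕ) (hi : i < m) :
      (if word σ (i + 2) < word σ (i + 1) then 1 else 0) =
        (if word τ (i + 1) < word τ i then 1 else 0) +
          if i = 0 then (if 0 < τ.toFun 1 ∧ τ.toFun 1 < s then 1 else 0) else 0 := by
    rw [word_of_le σ (by omega), word_of_le σ (by omega), word_of_le τ (by omega),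
      word_of_le τ (by omega)]
    rcases i with _ | k
    · have := τ.toFun_ne_zero (i := 1) (by simp only [mem_Icc]; omega)
      simp only [σ, cons, zero_add, τ.eq_zero 0 (by simp), shiftOut_lt_self_iff, if_true]
      split_ifs <;> omega
    · simp only [σ, cons, shiftOut_lt_shiftOut, add_eq_zero, one_ne_zero, and_false, if_false,
        add_zero]
  rw [desB, desB, card_filter, card_filter, sum_range_succ', if_neg no_first, add_zero,
    sum_congr rfl fun i hi => step i (mem_range.1 hi), sum_add_distrib, sum_ite_eq']
  rcases m with _ | k
  · simp [τ.eq_zero 1 (by simp)]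
  · simp

end SignedPerm

section Count

open SignedPerm

variable {m : ℕ}

theorem card_eq_sum_card_toFun_one_eq (hm : 1 ≤ m) (P : SignedPerm m → Prop) :
    Nat.card {τ // P τ} = ∑ j ∈ Icc 1 m,
      (Nat.card {τ // P τ ∧ τ.toFun 1 = j} + Nat.card {τ // P τ ∧ τ.toFun 1 = -j}) := by
  classical
  have : Fintype (SignedPerm m) := Fintype.ofFinite _
  simp only [Nat.card_eq_fintype_card, Fintype.card_subtype]
  rw [card_eq_sum_card_fiberwise (f := fun τ => (τ.toFun 1).natAbs) (t := Icc 1 m)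
    fun τ _ => τ.mem_abs 1 (by simp only [mem_Icc]; omega)]
  refine sum_congr rfl fun j hj => ?_
  rw [filter_filter, ← card_union_of_disjoint, ← filter_or]
  · simp only [← and_or_left, Int.natAbs_eq_iff]
  · rw [mem_Icc] at hj
    exact disjoint_filter.2 fun τ _ ⟨_, h⟩ ⟨_, h'⟩ => by omega

theorem card_fiber_eq_BP (s : ℕ) (j r : ℤ) :
    Nat.card {τ : SignedPerm m // (0 < τ.toFun m ∧
      (desB τ : ℤ) + (if 0 < τ.toFun 1 ∧ τ.toFun 1 < s then 1 else 0) = r) ∧ τ.toFun 1 = j} =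
      BP m j (r - if 0 < j ∧ j < s then 1 else 0) :=
  Nat.card_congr <| Equiv.subtypeEquivRight fun τ => by
    constructor
    · rintro ⟨⟨hpos, hdes⟩, rfl⟩
      exact ⟨hpos, rfl, by omega⟩
    · rintro ⟨hpos, rfl, hdes⟩
      exact ⟨⟨hpos, by omega⟩, rfl⟩

theorem BP_succ_eq_card (hm : 1 ≤ m) (s : ℤ) (hs : 1 ≤ s) (hsm : s ≤ m + 1) (r : ℤ) :
    BP (m + 1) s r = Nat.card {τ : SignedPerm m // 0 < τ.toFun m ∧
      (desB τ : ℤ) + (if 0 < τ.toFun 1 ∧ τ.toFun 1 < s then 1 else 0) = r} := by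
  refine Nat.card_congr (((consEquiv s hs hsm).subtypeEquiv fun τ => ?_).trans
    (Equiv.subtypeSubtypeEquivSubtype fun h => h.2.1)).symm
  rw [consEquiv, Equiv.coe_fn_mk, cons_last_pos_iff hs hsm hm, desB_cons]
  push_cast
  exact ⟨fun ⟨hpos, hdes⟩ => ⟨hpos, rfl, hdes⟩, fun ⟨hpos, _, hdes⟩ => ⟨hpos, hdes⟩⟩

theorem BP_succ (hm : 1 ≤ m) (s : ℕ) (hs : 1 ≤ s) (hsm : s ≤ m + 1) (r : ℤ) :
    BP (m + 1) s r = ∑ j ∈ Icc 1 (s - 1), BP m j (r - 1) + ∑ j ∈ Icc 1 m, BP m (-j) r +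
      ∑ j ∈ Icc s m, BP m j r := by
  rw [BP_succ_eq_card hm s (by exact_mod_cast hs) (by exact_mod_cast hsm),
    card_eq_sum_card_toFun_one_eq hm]
  simp only [card_fiber_eq_BP, sum_add_distrib]
  have positive : ∑ j ∈ Icc 1 m, BP m j (r - if 0 < (j : ℤ) ∧ (j : ℤ) < s then 1 else 0) =
      ∑ j ∈ Icc 1 (s - 1), BP m j (r - 1) + ∑ j ∈ Icc s m, BP m j r := by
    have hsplit : Icc 1 m = Icc 1 (s - 1) ∪ Icc s m := by
      ext; simp only [mem_union, mem_Icc]; omega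
    rw [hsplit, sum_union (disjoint_left.2 fun j h h' => by simp only [mem_Icc] at h h'; omega)]
    congr 1 <;> refine sum_congr rfl fun j hj => ?_ <;> rw [mem_Icc] at hj
    · rw [if_pos (by omega)]
    · rw [if_neg (by omega), sub_zero]
  have negative : ∑ j ∈ Icc 1 m, BP m (-j) (r - if 0 < -(j : ℤ) ∧ -(j : ℤ) < s then 1 else 0) =
      ∑ j ∈ Icc 1 m, BP m (-j) r :=
    sum_congr rfl fun j hj => by rw [mem_Icc] at hj; rw [if_neg (by omega), sub_zero]
  rw [positive, negative, add_right_comm]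

end Count

theorem BP_one_one_zero : BP 1 1 0 = 1 := by
  rw [BP, Nat.card_eq_one_iff_unique]
  refine ⟨⟨fun ⟨σ, _, hσ, _⟩ ⟨τ, _, hτ, _⟩ => Subtype.ext (SignedPerm.ext_Icc fun i hi => ?_)⟩,
    ⟨⟨SignedPerm.cons 1 le_rfl le_rfl SignedPerm.empty, by decide, rfl, ?_⟩⟩⟩
  · obtain rfl : i = 1 := by simp only [mem_Icc] at hi; omega
    rw [hσ, hτ]
  · rw [SignedPerm.desB_cons, show desB SignedPerm.empty = 0 from rfl]
    simp [SignedPerm.empty]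

theorem BP_one_neg_one (r : ℤ) : BP 1 (-1) r = 0 :=
  Nat.card_eq_zero.2 (Or.inl ⟨fun ⟨_, hpos, h1, _⟩ => by omega⟩)

theorem stmt2_general (n s r : ℕ) (hn : 2 ≤ n) (hs1 : 1 ≤ s) (hsn : s ≤ n) :
    (BP n (s : ℤ) (r : ℤ) =
      (∑ j ∈ Finset.Icc 1 (s - 1), BP (n - 1) (j : ℤ) ((r : ℤ) - 1)) +
      (∑ j ∈ Finset.Icc 1 (n - 1), BP (n - 1) (-(j : ℤ)) (r : ℤ)) +
      (∑ j ∈ Finset.Icc s (n - 1), BP (n - 1) (j : ℤ) (r : ℤ))) ∧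
    BP 1 1 0 = 1 ∧ (∀ r' : ℤ, BP 1 (-1) r' = 0) := by
  obtain ⟨m, rfl⟩ : ∃ m, n = m + 1 := ⟨n - 1, by omega⟩
  rw [Nat.add_sub_cancel]
  exact ⟨BP_succ (by omega) s hs1 hsn r, BP_one_one_zero, BP_one_neg_one⟩

/-- Recurrence for `B^+(n,s,r)`, together with the initial conditions
`B^+(1,1,0) = 1` and `B^+(1,-1,r) = 0`. -/
theorem stmt2 (n s r : ℕ) (hn : 2 ≤ n) (hs1 : 1 ≤ s) (hsn : s ≤ n) (hr : r ≤ n - 1) :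
    (BP n (s : ℤ) (r : ℤ) =
      (∑ j ∈ Finset.Icc 1 (s - 1), BP (n - 1) (j : ℤ) ((r : ℤ) - 1)) +
      (∑ j ∈ Finset.Icc 1 (n - 1), BP (n - 1) (-(j : ℤ)) (r : ℤ)) +
      (∑ j ∈ Finset.Icc s (n - 1), BP (n - 1) (j : ℤ) (r : ℤ))) ∧
    BP 1 1 0 = 1 ∧ (∀ r' : ℤ, BP 1 (-1) r' = 0) :=
  stmt2_general n s r hn hs1 hsn
end

section
/- For a signed permutation σ ∈ B_n, define a slide as a maximal decreasing run of the extended word σ_0 σ_1 ⋯ σ_n σ_{n+1} (with σ_0 = 0, σ_{n+1} = -∞) of length at least 2. Let b^{++}(n,k,s) be the number of σ ∈ B_n with σ_1 > 0, σ_n > 0, exactly k type-B descents, and exactly s+1 slides, and let b^{++}(n,s) = b^{++}(n,s,s). Then b^{++}(n,k,s) = C(n-1-2s, k-s) · b^{++}(n,s), where C denotes the binomial coefficient. -/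
open Finset Polynomial

namespace SPaux

variable {n : ℕ}

theorem SignedPerm.ext' {σ τ : SignedPerm n} (h : σ.toFun = τ.toFun) : σ = τ := by
  cases σ; cases τ; simpa using h

lemma word_le (σ : SignedPerm n) {m : ℕ} (hm : m ≤ n) : word σ m = σ.toFun m := if_pos hm

lemma word_gt (σ : SignedPerm n) {m : ℕ} (hm : n < m) : word σ m = -(n + 1 : ℤ) :=
  if_neg (by omega)

lemma word_zero (σ : SignedPerm n) : word σ 0 = 0 := by
  rw [word_le σ (Nat.zero_le n), σ.eq_zero 0 (by simp)]

lemma word_abs (σ : SignedPerm n) {m : ℕ} (h1 : 1 ≤ m) (hm : m ≤ n) :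
    1 ≤ (word σ m).natAbs ∧ (word σ m).natAbs ≤ n := by
  rw [word_le σ hm]
  have := σ.mem_abs m (by simp only [Finset.mem_Icc]; omega)
  simp only [Finset.mem_Icc] at this
  exact this

lemma word_ne (σ : SignedPerm n) {a b : ℕ} (ha : a ≤ n + 1) (hb : b ≤ n + 1) (hab : a ≠ b) :
    word σ a ≠ word σ b := by
  intro h
  rcases Nat.lt_or_ge n a with h1 | h1
  · rcases Nat.lt_or_ge n b with h2 | h2
    · omega
    · rw [word_gt σ h1] at h
      rcases Nat.eq_zero_or_pos b with rfl | hb1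
      · rw [word_zero] at h; omega
      · have := word_abs σ hb1 h2; omega
  · rcases Nat.lt_or_ge n b with h2 | h2
    · rw [word_gt σ h2] at h
      rcases Nat.eq_zero_or_pos a with rfl | ha1
      · rw [word_zero] at h; omega
      · have := word_abs σ ha1 h1; omega
    · rcases Nat.eq_zero_or_pos a with rfl | ha1
      · rcases Nat.eq_zero_or_pos b with rfl | hb1
        · omega
        · rw [word_zero] at h; have := word_abs σ hb1 h2; omega
      · rcases Nat.eq_zero_or_pos b with rfl | hb1
        · rw [word_zero] at h; have := word_abs σ ha1 h1; omega
        · refine hab (σ.inj_abs a (by simp only [Finset.mem_Icc]; omega) b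
            (by simp only [Finset.mem_Icc]; omega) ?_)
          rw [word_le σ h1, word_le σ h2] at h
          rw [h]

/-- peak -/
def pkP (σ : SignedPerm n) (m : ℕ) : Prop :=
  word σ (m - 1) < word σ m ∧ word σ (m + 1) < word σ m

/-- valley -/
def vlP (σ : SignedPerm n) (m : ℕ) : Prop :=
  word σ m < word σ (m - 1) ∧ word σ m < word σ (m + 1)

/-- double descent -/
def ddP (σ : SignedPerm n) (m : ℕ) : Prop :=
  word σ m < word σ (m - 1) ∧ word σ (m + 1) < word σ m

/-- double ascent -/
def daP (σ : SignedPerm n) (m : ℕ) : Prop :=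
  word σ (m - 1) < word σ m ∧ word σ m < word σ (m + 1)

instance (σ : SignedPerm n) : DecidablePred (pkP σ) := fun _ => by unfold pkP; infer_instance
instance (σ : SignedPerm n) : DecidablePred (vlP σ) := fun _ => by unfold vlP; infer_instance
instance (σ : SignedPerm n) : DecidablePred (ddP σ) := fun _ => by unfold ddP; infer_instance
instance (σ : SignedPerm n) : DecidablePred (daP σ) := fun _ => by unfold daP; infer_instance

def pkc (σ : SignedPerm n) : ℕ := ((Icc 1 n).filter (pkP σ)).card
def vlc (σ : SignedPerm n) : ℕ := ((Icc 1 n).filter (vlP σ)).card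
def ddc (σ : SignedPerm n) : ℕ := ((Icc 1 n).filter (ddP σ)).card
def dac (σ : SignedPerm n) : ℕ := ((Icc 1 n).filter (daP σ)).card

lemma one_le_n (σ : SignedPerm n) (h1 : 0 < σ.toFun 1) : 1 ≤ n := by
  by_contra h
  have := σ.eq_zero 1 (by simp only [Finset.mem_Icc]; omega)
  omega

lemma slides_eq_pkc (σ : SignedPerm n) (h1 : 0 < σ.toFun 1) : slides σ = pkc σ := by
  have hn := one_le_n σ h1
  unfold slides pkc
  congr 1
  ext a
  simp only [Finset.mem_filter, Finset.mem_range, Finset.mem_Icc, pkP]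
  constructor
  · rintro ⟨ha, h2, h3⟩
    have ha0 : a ≠ 0 := by
      rintro rfl
      rw [word_zero, word_le σ hn] at h3; omega
    exact ⟨⟨by omega, by omega⟩, h2.resolve_left ha0, h3⟩
  · rintro ⟨⟨ha1, ha2⟩, h2, h3⟩
    exact ⟨by omega, Or.inr h2, h3⟩

lemma desB_eq (σ : SignedPerm n) : desB σ = ddc σ + vlc σ := by
  have step1 : desB σ = ((Icc 1 n).filter (fun m => word σ m < word σ (m - 1))).card := by
    unfold desB
    apply Finset.card_bij (fun i _ => i + 1)
    · intro a ha
      simp only [Finset.mem_filter, Finset.mem_range] at ha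
      simp only [Finset.mem_filter, Finset.mem_Icc]
      refine ⟨⟨by omega, by omega⟩, ?_⟩
      have : a + 1 - 1 = a := by omega
      rw [this]
      exact ha.2
    · intro a _ b _ h; omega
    · intro b hb
      simp only [Finset.mem_filter, Finset.mem_Icc] at hb
      refine ⟨b - 1, ?_, by omega⟩
      simp only [Finset.mem_filter, Finset.mem_range]
      have e1 : b - 1 + 1 = b := by omega
      rw [e1]
      exact ⟨by omega, hb.2⟩
  have e1 : ((Icc 1 n).filter (fun m => word σ m < word σ (m - 1))).filter
      (fun m => word σ (m + 1) < word σ m) = (Icc 1 n).filter (ddP σ) := by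
    ext m
    simp only [Finset.mem_filter, Finset.mem_Icc, ddP]
    tauto
  have e2 : ((Icc 1 n).filter (fun m => word σ m < word σ (m - 1))).filter
      (fun m => ¬ word σ (m + 1) < word σ m) = (Icc 1 n).filter (vlP σ) := by
    ext m
    simp only [Finset.mem_filter, Finset.mem_Icc, vlP]
    constructor
    · rintro ⟨⟨hm, hd⟩, hnd⟩
      have hne : word σ m ≠ word σ (m + 1) := word_ne σ (by omega) (by omega) (by omega)
      exact ⟨hm, hd, by omega⟩
    · rintro ⟨hm, hd, hlt⟩
      exact ⟨⟨hm, hd⟩, by omega⟩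
  have := Finset.card_filter_add_card_filter_not
    (s := (Icc 1 n).filter (fun m => word σ m < word σ (m - 1)))
    (p := fun m => word σ (m + 1) < word σ m)
  rw [e1, e2] at this
  unfold ddc vlc
  omega

lemma pk_vl_aux (a : ℕ → ℤ) :
    ∀ M, 1 ≤ M → (∀ m, m < M → a m ≠ a (m + 1)) → a 0 < a 1 →
    ((Icc 1 (M - 1)).filter (fun m => a (m - 1) < a m ∧ a (m + 1) < a m)).card
      = ((Icc 1 (M - 1)).filter (fun m => a m < a (m - 1) ∧ a m < a (m + 1))).card
        + (if a M < a (M - 1) then 1 else 0) := by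
  intro M
  induction M with
  | zero => intro h; exact absurd h (by omega)
  | succ M IH =>
    intro _ hne h01
    rcases Nat.eq_zero_or_pos M with rfl | hM
    · rw [show 0 + 1 - 1 = 0 from rfl, show Icc 1 0 = (∅ : Finset ℕ) from rfl]
      simp only [Finset.filter_empty, Finset.card_empty]
      have hif : (if a (0 + 1) < a (0 + 1 - 1) then 1 else 0) = 0 := by
        rw [show (0 : ℕ) + 1 = 1 from rfl, show (1 : ℕ) - 1 = 0 from rfl, if_neg (by omega)]
      rw [hif]
    · have IH' := IH hM (fun m hm => hne m (by omega)) h01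
      have hins : Icc 1 (M + 1 - 1) = insert M (Icc 1 (M - 1)) := by
        ext m
        simp only [Finset.mem_Icc, Finset.mem_insert]
        omega
      have hnM : M ∉ Icc 1 (M - 1) := by simp only [Finset.mem_Icc]; omega
      rw [hins, Finset.filter_insert, Finset.filter_insert]
      have hM1 : M - 1 + 1 = M := by omega
      have hne1 := hne M (by omega)
      have hne2' := hne (M - 1) (by omega)
      rw [hM1] at hne2'
      have hsimp : M + 1 - 1 = M := by omega
      rw [hsimp]
      by_cases c1 : a (M - 1) < a M <;> by_cases c2 : a (M + 1) < a M
      · rw [if_pos ⟨c1, c2⟩, if_neg (by omega), if_pos c2,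
          Finset.card_insert_of_notMem (fun hc => hnM (Finset.mem_of_mem_filter _ hc))]
        rw [if_neg (by omega)] at IH'
        omega
      · rw [if_neg (by omega), if_neg (by omega), if_neg (by omega)]
        rw [if_neg (by omega)] at IH'
        omega
      · rw [if_neg (by omega), if_neg (by omega), if_pos c2]
        rw [if_pos (by omega)] at IH'
        omega
      · rw [if_neg (by omega), if_pos ⟨by omega, by omega⟩, if_neg c2,
          Finset.card_insert_of_notMem (fun hc => hnM (Finset.mem_of_mem_filter _ hc))]
        rw [if_pos (by omega)] at IH'
        omega

lemma pkc_eq_vlc (σ : SignedPerm n) (h1 : 0 < σ.toFun 1) : pkc σ = vlc σ + 1 := by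
  have hn := one_le_n σ h1
  have key := pk_vl_aux (word σ) (n + 1) (by omega)
    (fun m hm => word_ne σ (by omega) (by omega) (by omega))
    (by rw [word_zero, word_le σ hn]; omega)
  have hsimp : n + 1 - 1 = n := by omega
  rw [hsimp] at key
  have hlast : word σ (n + 1) < word σ n := by
    rw [word_gt σ (by omega)]
    have := word_abs σ hn le_rfl
    omega
  rw [if_pos hlast] at key
  have epk : (Icc 1 n).filter (pkP σ) =
      (Icc 1 n).filter (fun m => word σ (m - 1) < word σ m ∧ word σ (m + 1) < word σ m) := by
    apply Finset.filter_congr; intro m _; rfl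
  have evl : (Icc 1 n).filter (vlP σ) =
      (Icc 1 n).filter (fun m => word σ m < word σ (m - 1) ∧ word σ m < word σ (m + 1)) := by
    apply Finset.filter_congr; intro m _; rfl
  unfold pkc vlc
  rw [epk, evl]
  omega

lemma sum_counts (σ : SignedPerm n) : pkc σ + vlc σ + ddc σ + dac σ = n := by
  classical
  have h0 := Finset.card_filter_add_card_filter_not
    (s := Icc 1 n) (p := fun m => word σ (m - 1) < word σ m)
  have h1 := Finset.card_filter_add_card_filter_not
    (s := (Icc 1 n).filter (fun m => word σ (m - 1) < word σ m))
    (p := fun m => word σ (m + 1) < word σ m)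
  have h2 := Finset.card_filter_add_card_filter_not
    (s := (Icc 1 n).filter (fun m => ¬ word σ (m - 1) < word σ m))
    (p := fun m => word σ (m + 1) < word σ m)
  have e1 : ((Icc 1 n).filter (fun m => word σ (m - 1) < word σ m)).filter
      (fun m => word σ (m + 1) < word σ m) = (Icc 1 n).filter (pkP σ) := by
    ext m; simp only [Finset.mem_filter, Finset.mem_Icc, pkP]; tauto
  have e2 : ((Icc 1 n).filter (fun m => word σ (m - 1) < word σ m)).filter
      (fun m => ¬ word σ (m + 1) < word σ m) = (Icc 1 n).filter (daP σ) := by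
    ext m; simp only [Finset.mem_filter, Finset.mem_Icc, daP]
    constructor
    · rintro ⟨⟨hm, hd⟩, hnd⟩
      have hne : word σ m ≠ word σ (m + 1) := word_ne σ (by omega) (by omega) (by omega)
      exact ⟨hm, hd, by omega⟩
    · rintro ⟨hm, hd, hlt⟩
      exact ⟨⟨hm, hd⟩, by omega⟩
  have e3 : ((Icc 1 n).filter (fun m => ¬ word σ (m - 1) < word σ m)).filter
      (fun m => word σ (m + 1) < word σ m) = (Icc 1 n).filter (ddP σ) := by
    ext m; simp only [Finset.mem_filter, Finset.mem_Icc, ddP]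
    constructor
    · rintro ⟨⟨hm, hd⟩, hnd⟩
      have hne : word σ (m - 1) ≠ word σ m := word_ne σ (by omega) (by omega) (by omega)
      exact ⟨hm, by omega, hnd⟩
    · rintro ⟨hm, hd, hlt⟩
      exact ⟨⟨hm, by omega⟩, hlt⟩
  have e4 : ((Icc 1 n).filter (fun m => ¬ word σ (m - 1) < word σ m)).filter
      (fun m => ¬ word σ (m + 1) < word σ m) = (Icc 1 n).filter (vlP σ) := by
    ext m; simp only [Finset.mem_filter, Finset.mem_Icc, vlP]
    constructor
    · rintro ⟨⟨hm, hd⟩, hnd⟩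
      have hne : word σ (m - 1) ≠ word σ m := word_ne σ (by omega) (by omega) (by omega)
      have hne2 : word σ m ≠ word σ (m + 1) := word_ne σ (by omega) (by omega) (by omega)
      exact ⟨hm, by omega, by omega⟩
    · rintro ⟨hm, hd, hlt⟩
      exact ⟨⟨hm, by omega⟩, by omega⟩
  rw [e1, e2] at h1
  rw [e3, e4] at h2
  have hc : (Icc 1 n).card = n := by rw [Nat.card_Icc]; omega
  unfold pkc vlc ddc dac
  omega

lemma class_counts (σ : SignedPerm n) (h1 : 0 < σ.toFun 1) {k s : ℕ}
    (hk : desB σ = k) (hs : slides σ = s + 1) :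
    ddc σ = k - s ∧ s ≤ k ∧ dac σ + (k - s) + 2 * s + 1 = n := by
  have e1 := slides_eq_pkc σ h1
  have e2 := desB_eq σ
  have e3 := pkc_eq_vlc σ h1
  have e4 := sum_counts σ
  omega

end SPaux

namespace SPaux
variable {n : ℕ}

/-- cycle map: `j ↦ i`, `(j, i] ∋ m ↦ m - 1`, identity elsewhere (for `j < i`). -/
def cycL (j i m : ℕ) : ℕ := if m = j then i else if j < m ∧ m ≤ i then m - 1 else m

/-- cycle map: `j ↦ i`, `[i, j) ∋ m ↦ m + 1`, identity elsewhere (for `i < j`). -/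
def cycR (i j m : ℕ) : ℕ := if m = j then i else if i ≤ m ∧ m < j then m + 1 else m

/-- new position map for a left move: `i ↦ j`, `[j, i) ∋ m ↦ m + 1`. -/
def tauL (j i m : ℕ) : ℕ := if m = i then j else if j ≤ m ∧ m < i then m + 1 else m

/-- new position map for a right move: `i ↦ j`, `(i, j] ∋ m ↦ m - 1`. -/
def tauR (i j m : ℕ) : ℕ := if m = i then j else if i < m ∧ m ≤ j then m - 1 else m

lemma cycL_tauL {j i m : ℕ} (h : j < i) : cycL j i (tauL j i m) = m := by
  unfold cycL tauL; split_ifs <;> omega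

lemma tauL_cycL {j i m : ℕ} (h : j < i) : tauL j i (cycL j i m) = m := by
  unfold cycL tauL; split_ifs <;> omega

lemma cycR_tauR {i j m : ℕ} (h : i < j) : cycR i j (tauR i j m) = m := by
  unfold cycR tauR; split_ifs <;> omega

lemma tauR_cycR {i j m : ℕ} (h : i < j) : tauR i j (cycR i j m) = m := by
  unfold cycR tauR; split_ifs <;> omega

lemma cycL_cycR {j i m : ℕ} (h : j < i) : cycL j i (cycR j i m) = m := by
  unfold cycL cycR; split_ifs <;> omega

lemma cycR_cycL {i j m : ℕ} (h : i < j) : cycR i j (cycL i j m) = m := by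
  unfold cycL cycR; split_ifs <;> omega

def SignedPerm.comp (σ : SignedPerm n) (ρ : ℕ → ℕ)
    (h1 : ∀ m, m ∈ Icc 1 n ↔ ρ m ∈ Icc 1 n)
    (h2 : ∀ a b, ρ a = ρ b → a = b) : SignedPerm n where
  toFun := fun m => σ.toFun (ρ m)
  mem_abs := fun i hi => σ.mem_abs (ρ i) ((h1 i).mp hi)
  inj_abs := fun a ha b hb h =>
    h2 a b (σ.inj_abs (ρ a) ((h1 a).mp ha) (ρ b) ((h1 b).mp hb) h)
  eq_zero := fun i hi => σ.eq_zero (ρ i) (fun hmem => hi ((h1 i).mpr hmem))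

def moveL (σ : SignedPerm n) (i j : ℕ) : SignedPerm n :=
  if h : 1 ≤ j ∧ j < i ∧ i ≤ n then
    SignedPerm.comp σ (cycL j i)
      (by
        obtain ⟨hj, hji, hin⟩ := h
        intro m
        simp only [Finset.mem_Icc]
        unfold cycL; split_ifs <;> omega)
      (by
        obtain ⟨hj, hji, hin⟩ := h
        intro a b hab
        unfold cycL at hab
        split_ifs at hab <;> omega)
  else σ

def moveR (σ : SignedPerm n) (i j : ℕ) : SignedPerm n :=
  if h : 1 ≤ i ∧ i < j ∧ j ≤ n then
    SignedPerm.comp σ (cycR i j)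
      (by
        obtain ⟨hj, hji, hin⟩ := h
        intro m
        simp only [Finset.mem_Icc]
        unfold cycR; split_ifs <;> omega)
      (by
        obtain ⟨hj, hji, hin⟩ := h
        intro a b hab
        unfold cycR at hab
        split_ifs at hab <;> omega)
  else σ

lemma moveL_toFun (σ : SignedPerm n) {i j : ℕ} (h : 1 ≤ j ∧ j < i ∧ i ≤ n) (m : ℕ) :
    (moveL σ i j).toFun m = σ.toFun (cycL j i m) := by
  rw [moveL, dif_pos h]; rfl

lemma moveR_toFun (σ : SignedPerm n) {i j : ℕ} (h : 1 ≤ i ∧ i < j ∧ j ≤ n) (m : ℕ) :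
    (moveR σ i j).toFun m = σ.toFun (cycR i j m) := by
  rw [moveR, dif_pos h]; rfl

lemma word_moveL (σ : SignedPerm n) {i j : ℕ} (h : 1 ≤ j ∧ j < i ∧ i ≤ n) (m : ℕ) :
    word (moveL σ i j) m = word σ (cycL j i m) := by
  obtain ⟨hj, hji, hin⟩ := h
  unfold word
  by_cases hm : m ≤ n
  · rw [if_pos hm, if_pos (by unfold cycL; split_ifs <;> omega), moveL_toFun σ ⟨hj, hji, hin⟩]
  · rw [if_neg hm, if_neg (by unfold cycL; split_ifs <;> omega)]

lemma word_moveR (σ : SignedPerm n) {i j : ℕ} (h : 1 ≤ i ∧ i < j ∧ j ≤ n) (m : ℕ) :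
    word (moveR σ i j) m = word σ (cycR i j m) := by
  obtain ⟨hj, hji, hin⟩ := h
  unfold word
  by_cases hm : m ≤ n
  · rw [if_pos hm, if_pos (by unfold cycR; split_ifs <;> omega), moveR_toFun σ ⟨hj, hji, hin⟩]
  · rw [if_neg hm, if_neg (by unfold cycR; split_ifs <;> omega)]

end SPaux

namespace SPaux
variable {n : ℕ}

lemma count_transport (Q Q' : ℕ → Prop) [DecidablePred Q] [DecidablePred Q']
    (τ ρ : ℕ → ℕ) (i j : ℕ)
    (hmem : ∀ m, 1 ≤ m → m ≤ n → m ≠ i → (1 ≤ τ m ∧ τ m ≤ n))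
    (hmem' : ∀ m, 1 ≤ m → m ≤ n → m ≠ j → (1 ≤ ρ m ∧ ρ m ≤ n))
    (hρτ : ∀ m, ρ (τ m) = m) (hτρ : ∀ m, τ (ρ m) = m)
    (hij : τ i = j)
    (hQi : ¬ Q i) (hQ'j : ¬ Q' j)
    (h : ∀ m, 1 ≤ m → m ≤ n → m ≠ i → (Q m ↔ Q' (τ m))) :
    ((Icc 1 n).filter Q).card = ((Icc 1 n).filter Q').card := by
  apply Finset.card_bij' (fun m _ => τ m) (fun m _ => ρ m)
  · intro a ha
    simp only [Finset.mem_filter, Finset.mem_Icc] at ha ⊢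
    have hane : a ≠ i := fun hc => hQi (hc ▸ ha.2)
    obtain ⟨h1, h2⟩ := hmem a ha.1.1 ha.1.2 hane
    exact ⟨⟨h1, h2⟩, (h a ha.1.1 ha.1.2 hane).mp ha.2⟩
  · intro b hb
    simp only [Finset.mem_filter, Finset.mem_Icc] at hb ⊢
    have hbne : b ≠ j := fun hc => hQ'j (hc ▸ hb.2)
    obtain ⟨h1, h2⟩ := hmem' b hb.1.1 hb.1.2 hbne
    have hρne : ρ b ≠ i := by
      intro hc
      exact hbne (by rw [← hτρ b, hc, hij])
    refine ⟨⟨h1, h2⟩, ?_⟩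
    have := h (ρ b) h1 h2 hρne
    rw [hτρ b] at this
    exact this.mpr hb.2
  · intro a _; exact hρτ a
  · intro b _; exact hτρ b

lemma moveL_pairs (σ : SignedPerm n) {i j : ℕ} (hj : 1 ≤ j) (hji : j < i) (hin : i ≤ n)
    (hA : word σ (j - 1) < word σ j ↔ word σ (j - 1) < word σ i)
    (hC : word σ i < word σ j ↔ word σ (j - 1) < word σ j)
    (hB : word σ (i - 1) < word σ (i + 1) ↔ word σ (i - 1) < word σ i)
    (hD : word σ (i + 1) < word σ (i - 1) ↔ word σ (i + 1) < word σ i)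
    {m : ℕ} (h1m : 1 ≤ m) (hmn : m ≤ n) (hmi : m ≠ i) :
    ((word (moveL σ i j) (tauL j i m - 1) < word (moveL σ i j) (tauL j i m)) ↔
        (word σ (m - 1) < word σ m))
    ∧ ((word (moveL σ i j) (tauL j i m + 1) < word (moveL σ i j) (tauL j i m)) ↔
        (word σ (m + 1) < word σ m)) := by
  have W := word_moveL σ ⟨hj, hji, hin⟩
  have ne_i1i1 : word σ (i - 1) ≠ word σ (i + 1) := word_ne σ (by omega) (by omega) (by omega)
  have ne_i1i : word σ (i - 1) ≠ word σ i := word_ne σ (by omega) (by omega) (by omega)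
  have ne_ii1 : word σ i ≠ word σ (i + 1) := word_ne σ (by omega) (by omega) (by omega)
  by_cases hc1 : m + 1 < j
  · -- far left of j : untouched
    have e0 : word (moveL σ i j) (tauL j i m - 1) = word σ (m - 1) := by
      rw [W]; congr 1; unfold tauL cycL; split_ifs <;> omega
    have e1 : word (moveL σ i j) (tauL j i m) = word σ m := by
      rw [W]; congr 1; unfold tauL cycL; split_ifs <;> omega
    have e2 : word (moveL σ i j) (tauL j i m + 1) = word σ (m + 1) := by
      rw [W]; congr 1; unfold tauL cycL; split_ifs <;> omega
    rw [e0, e1, e2]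
    exact ⟨Iff.rfl, Iff.rfl⟩
  · by_cases hc2 : m + 1 = j
    · -- m = j - 1
      have e0 : word (moveL σ i j) (tauL j i m - 1) = word σ (m - 1) := by
        rw [W]; congr 1; unfold tauL cycL; split_ifs <;> omega
      have e1 : word (moveL σ i j) (tauL j i m) = word σ m := by
        rw [W]; congr 1; unfold tauL cycL; split_ifs <;> omega
      have e2 : word (moveL σ i j) (tauL j i m + 1) = word σ i := by
        rw [W]; congr 1; unfold tauL cycL; split_ifs <;> omega
      have l1 : word σ (m + 1) = word σ j := by rw [hc2]
      have l2 : word σ m = word σ (j - 1) := by congr 1 <;> omega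
      have ne1 : word σ (j - 1) ≠ word σ j := word_ne σ (by omega) (by omega) (by omega)
      have ne2 : word σ (j - 1) ≠ word σ i := word_ne σ (by omega) (by omega) (by omega)
      rw [e0, e1, e2, l1, l2]
      constructor
      · exact Iff.rfl
      · omega
    · by_cases hc3 : m = j
      · -- m = j, the letter moving one step right
        subst hc3
        have e0 : word (moveL σ i m) (tauL m i m - 1) = word σ i := by
          rw [W]; congr 1; unfold tauL cycL; split_ifs <;> omega
        have e1 : word (moveL σ i m) (tauL m i m) = word σ m := by
          rw [W]; congr 1; unfold tauL cycL; split_ifs <;> omega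
        rw [e0, e1]
        by_cases hc4 : m + 2 ≤ i
        · have e2 : word (moveL σ i m) (tauL m i m + 1) = word σ (m + 1) := by
            rw [W]; congr 1; unfold tauL cycL; split_ifs <;> omega
          rw [e2]
          exact ⟨hC, Iff.rfl⟩
        · -- i = m + 1
          have e2 : word (moveL σ i m) (tauL m i m + 1) = word σ (i + 1) := by
            rw [W]; congr 1; unfold tauL cycL; split_ifs <;> omega
          rw [e2]
          have l1 : word σ (m + 1) = word σ i := by congr 1 <;> omega
          have l2 : word σ (i - 1) = word σ m := by congr 1 <;> omega
          rw [l1]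
          rw [l2] at hB hD ne_i1i ne_i1i1
          exact ⟨hC, by omega⟩
      · by_cases hc5 : m < i
        · -- j < m < i : shifted letters
          have e0 : word (moveL σ i j) (tauL j i m - 1) = word σ (m - 1) := by
            rw [W]; congr 1; unfold tauL cycL; split_ifs <;> omega
          have e1 : word (moveL σ i j) (tauL j i m) = word σ m := by
            rw [W]; congr 1; unfold tauL cycL; split_ifs <;> omega
          rw [e0, e1]
          by_cases hc4 : m + 2 ≤ i
          · have e2 : word (moveL σ i j) (tauL j i m + 1) = word σ (m + 1) := by
              rw [W]; congr 1; unfold tauL cycL; split_ifs <;> omega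
            rw [e2]
            exact ⟨Iff.rfl, Iff.rfl⟩
          · -- m = i - 1
            have e2 : word (moveL σ i j) (tauL j i m + 1) = word σ (i + 1) := by
              rw [W]; congr 1; unfold tauL cycL; split_ifs <;> omega
            rw [e2]
            have l1 : word σ (m + 1) = word σ i := by congr 1 <;> omega
            have l2 : word σ (i - 1) = word σ m := by congr 1 <;> omega
            rw [l1]
            rw [l2] at hB hD ne_i1i ne_i1i1
            exact ⟨Iff.rfl, by omega⟩
        · by_cases hc6 : m = i + 1
          · -- m = i + 1
            have e0 : word (moveL σ i j) (tauL j i m - 1) = word σ (i - 1) := by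
              rw [W]; congr 1; unfold tauL cycL; split_ifs <;> omega
            have e1 : word (moveL σ i j) (tauL j i m) = word σ m := by
              rw [W]; congr 1; unfold tauL cycL; split_ifs <;> omega
            have e2 : word (moveL σ i j) (tauL j i m + 1) = word σ (m + 1) := by
              rw [W]; congr 1; unfold tauL cycL; split_ifs <;> omega
            rw [e0, e1, e2]
            have l1 : word σ (m - 1) = word σ i := by congr 1 <;> omega
            have l2 : word σ m = word σ (i + 1) := by rw [hc6]
            rw [l1, l2]
            exact ⟨by omega, Iff.rfl⟩
          · -- m > i + 1 : untouched
            have e0 : word (moveL σ i j) (tauL j i m - 1) = word σ (m - 1) := by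
              rw [W]; congr 1; unfold tauL cycL; split_ifs <;> omega
            have e1 : word (moveL σ i j) (tauL j i m) = word σ m := by
              rw [W]; congr 1; unfold tauL cycL; split_ifs <;> omega
            have e2 : word (moveL σ i j) (tauL j i m + 1) = word σ (m + 1) := by
              rw [W]; congr 1; unfold tauL cycL; split_ifs <;> omega
            rw [e0, e1, e2]
            exact ⟨Iff.rfl, Iff.rfl⟩

end SPaux

namespace SPaux
variable {n : ℕ}

lemma moveR_pairs (σ : SignedPerm n) {i j : ℕ} (hi1 : 1 ≤ i) (hij : i < j) (hjn : j ≤ n)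
    (hA : word σ i < word σ (j + 1) ↔ word σ j < word σ (j + 1))
    (hC : word σ i < word σ j ↔ word σ (j + 1) < word σ j)
    (hB : word σ (i + 1) < word σ (i - 1) ↔ word σ i < word σ (i - 1))
    (hD : word σ (i - 1) < word σ (i + 1) ↔ word σ i < word σ (i + 1))
    {m : ℕ} (h1m : 1 ≤ m) (hmn : m ≤ n) (hmi : m ≠ i) :
    ((word (moveR σ i j) (tauR i j m - 1) < word (moveR σ i j) (tauR i j m)) ↔
        (word σ (m - 1) < word σ m))
    ∧ ((word (moveR σ i j) (tauR i j m + 1) < word (moveR σ i j) (tauR i j m)) ↔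
        (word σ (m + 1) < word σ m)) := by
  have W := word_moveR σ ⟨hi1, hij, hjn⟩
  by_cases hc1 : m + 1 < i
  · have e0 : word (moveR σ i j) (tauR i j m - 1) = word σ (m - 1) := by
      rw [W]; congr 1; unfold tauR cycR; split_ifs <;> omega
    have e1 : word (moveR σ i j) (tauR i j m) = word σ m := by
      rw [W]; congr 1; unfold tauR cycR; split_ifs <;> omega
    have e2 : word (moveR σ i j) (tauR i j m + 1) = word σ (m + 1) := by
      rw [W]; congr 1; unfold tauR cycR; split_ifs <;> omega
    rw [e0, e1, e2]
    exact ⟨Iff.rfl, Iff.rfl⟩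
  · by_cases hc2 : m + 1 = i
    · -- m = i - 1
      have e0 : word (moveR σ i j) (tauR i j m - 1) = word σ (m - 1) := by
        rw [W]; congr 1; unfold tauR cycR; split_ifs <;> omega
      have e1 : word (moveR σ i j) (tauR i j m) = word σ m := by
        rw [W]; congr 1; unfold tauR cycR; split_ifs <;> omega
      have e2 : word (moveR σ i j) (tauR i j m + 1) = word σ (i + 1) := by
        rw [W]; congr 1; unfold tauR cycR; split_ifs <;> omega
      have l1 : word σ (m + 1) = word σ i := by congr 1
      have l2 : word σ m = word σ (i - 1) := by congr 1 <;> omega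
      rw [e0, e1, e2, l1, l2]
      exact ⟨Iff.rfl, hB⟩
    · by_cases hc3 : m = i + 1
      · by_cases hc4 : m = j
        · -- j = i + 1 = m
          have e0 : word (moveR σ i j) (tauR i j m - 1) = word σ (i - 1) := by
            rw [W]; congr 1; unfold tauR cycR; split_ifs <;> omega
          have e1 : word (moveR σ i j) (tauR i j m) = word σ (i + 1) := by
            rw [W]; congr 1; unfold tauR cycR; split_ifs <;> omega
          have e2 : word (moveR σ i j) (tauR i j m + 1) = word σ i := by
            rw [W]; congr 1; unfold tauR cycR; split_ifs <;> omega
          have l1 : word σ (m - 1) = word σ i := by congr 1 <;> omega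
          have l2 : word σ m = word σ (i + 1) := by congr 1 <;> omega
          have l3 : word σ (m + 1) = word σ (i + 2) := by congr 1 <;> omega
          have l6 : word σ j = word σ (i + 1) := by congr 1 <;> omega
          have l7 : word σ (j + 1) = word σ (i + 2) := by congr 1 <;> omega
          rw [l6, l7] at hC
          rw [e0, e1, e2, l1, l2, l3]
          exact ⟨hD, hC⟩
        · -- m = i + 1 < j
          have e0 : word (moveR σ i j) (tauR i j m - 1) = word σ (i - 1) := by
            rw [W]; congr 1; unfold tauR cycR; split_ifs <;> omega
          have e1 : word (moveR σ i j) (tauR i j m) = word σ (i + 1) := by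
            rw [W]; congr 1; unfold tauR cycR; split_ifs <;> omega
          have e2 : word (moveR σ i j) (tauR i j m + 1) = word σ (m + 1) := by
            rw [W]; congr 1; unfold tauR cycR; split_ifs <;> omega
          have l1 : word σ (m - 1) = word σ i := by congr 1 <;> omega
          have l2 : word σ m = word σ (i + 1) := by congr 1 <;> omega
          rw [e0, e1, e2, l1, l2]
          exact ⟨hD, Iff.rfl⟩
      · by_cases hc5 : m ≤ j
        · by_cases hc6 : m = j
          · -- m = j ≥ i + 2
            have e0 : word (moveR σ i j) (tauR i j m - 1) = word σ (m - 1) := by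
              rw [W]; congr 1; unfold tauR cycR; split_ifs <;> omega
            have e1 : word (moveR σ i j) (tauR i j m) = word σ m := by
              rw [W]; congr 1; unfold tauR cycR; split_ifs <;> omega
            have e2 : word (moveR σ i j) (tauR i j m + 1) = word σ i := by
              rw [W]; congr 1; unfold tauR cycR; split_ifs <;> omega
            have l4 : word σ j = word σ m := by rw [hc6]
            have l5 : word σ (j + 1) = word σ (m + 1) := by rw [hc6]
            rw [l4, l5] at hC
            rw [e0, e1, e2]
            exact ⟨Iff.rfl, hC⟩
          · -- i + 1 < m < j
            have e0 : word (moveR σ i j) (tauR i j m - 1) = word σ (m - 1) := by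
              rw [W]; congr 1; unfold tauR cycR; split_ifs <;> omega
            have e1 : word (moveR σ i j) (tauR i j m) = word σ m := by
              rw [W]; congr 1; unfold tauR cycR; split_ifs <;> omega
            have e2 : word (moveR σ i j) (tauR i j m + 1) = word σ (m + 1) := by
              rw [W]; congr 1; unfold tauR cycR; split_ifs <;> omega
            rw [e0, e1, e2]
            exact ⟨Iff.rfl, Iff.rfl⟩
        · by_cases hc7 : m = j + 1
          · have e0 : word (moveR σ i j) (tauR i j m - 1) = word σ i := by
              rw [W]; congr 1; unfold tauR cycR; split_ifs <;> omega
            have e1 : word (moveR σ i j) (tauR i j m) = word σ m := by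
              rw [W]; congr 1; unfold tauR cycR; split_ifs <;> omega
            have e2 : word (moveR σ i j) (tauR i j m + 1) = word σ (m + 1) := by
              rw [W]; congr 1; unfold tauR cycR; split_ifs <;> omega
            have l8 : word σ (j + 1) = word σ m := by rw [hc7]
            have l9 : word σ j = word σ (m - 1) := by congr 1 <;> omega
            rw [l8, l9] at hA
            rw [e0, e1, e2]
            exact ⟨hA, Iff.rfl⟩
          · have e0 : word (moveR σ i j) (tauR i j m - 1) = word σ (m - 1) := by
              rw [W]; congr 1; unfold tauR cycR; split_ifs <;> omega
            have e1 : word (moveR σ i j) (tauR i j m) = word σ m := by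
              rw [W]; congr 1; unfold tauR cycR; split_ifs <;> omega
            have e2 : word (moveR σ i j) (tauR i j m + 1) = word σ (m + 1) := by
              rw [W]; congr 1; unfold tauR cycR; split_ifs <;> omega
            rw [e0, e1, e2]
            exact ⟨Iff.rfl, Iff.rfl⟩

end SPaux

namespace SPaux
variable {n : ℕ}

lemma filter_ne_card_pos (P : ℕ → Prop) [DecidablePred P] {i : ℕ}
    (hi : i ∈ Icc 1 n) (hP : P i) :
    ((Icc 1 n).filter P).card = ((Icc 1 n).filter (fun m => P m ∧ m ≠ i)).card + 1 := by
  classical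
  have he : (Icc 1 n).filter (fun m => P m ∧ m ≠ i) = ((Icc 1 n).filter P).erase i := by
    ext m
    simp only [Finset.mem_filter, Finset.mem_erase]
    tauto
  have hmem : i ∈ (Icc 1 n).filter P := Finset.mem_filter.mpr ⟨hi, hP⟩
  have hpos := Finset.card_pos.mpr ⟨i, hmem⟩
  have := Finset.card_erase_of_mem hmem
  rw [he, this]
  omega

lemma filter_ne_card_neg (P : ℕ → Prop) [DecidablePred P] {i : ℕ} (hP : ¬ P i) :
    ((Icc 1 n).filter P).card = ((Icc 1 n).filter (fun m => P m ∧ m ≠ i)).card := by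
  classical
  congr 1
  ext m
  simp only [Finset.mem_filter]
  constructor
  · rintro ⟨hm, hPm⟩
    exact ⟨hm, hPm, fun hc => hP (hc ▸ hPm)⟩
  · rintro ⟨hm, hPm, _⟩
    exact ⟨hm, hPm⟩

lemma counts_of_pairs (σ σ' : SignedPerm n) (τ ρ : ℕ → ℕ) (i j : ℕ)
    (hmem : ∀ m, 1 ≤ m → m ≤ n → m ≠ i → (1 ≤ τ m ∧ τ m ≤ n))
    (hmem' : ∀ m, 1 ≤ m → m ≤ n → m ≠ j → (1 ≤ ρ m ∧ ρ m ≤ n))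
    (hρτ : ∀ m, ρ (τ m) = m) (hτρ : ∀ m, τ (ρ m) = m) (hij : τ i = j)
    (pairs : ∀ m, 1 ≤ m → m ≤ n → m ≠ i →
      ((word σ' (τ m - 1) < word σ' (τ m)) ↔ (word σ (m - 1) < word σ m)) ∧
      ((word σ' (τ m + 1) < word σ' (τ m)) ↔ (word σ (m + 1) < word σ m)))
    (hNpi : ¬ pkP σ i) (hNpj : ¬ pkP σ' j)
    (hNvi : ¬ vlP σ i) (hNvj : ¬ vlP σ' j) :
    pkc σ' = pkc σ ∧ vlc σ' = vlc σ ∧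
    ((Icc 1 n).filter (fun m => ddP σ m ∧ m ≠ i)).card
      = ((Icc 1 n).filter (fun m => ddP σ' m ∧ m ≠ j)).card ∧
    ((Icc 1 n).filter (fun m => daP σ m ∧ m ≠ i)).card
      = ((Icc 1 n).filter (fun m => daP σ' m ∧ m ≠ j)).card := by
  classical
  have key : ∀ m, 1 ≤ m → m ≤ n → m ≠ i →
      (((word σ (m - 1) < word σ m) ↔ (word σ' (τ m - 1) < word σ' (τ m))) ∧
       ((word σ (m + 1) < word σ m) ↔ (word σ' (τ m + 1) < word σ' (τ m))) ∧
       word σ (m - 1) ≠ word σ m ∧ word σ (m + 1) ≠ word σ m ∧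
       word σ' (τ m - 1) ≠ word σ' (τ m) ∧ word σ' (τ m + 1) ≠ word σ' (τ m)) := by
    intro m h1 h2 h3
    obtain ⟨p1, p2⟩ := pairs m h1 h2 h3
    obtain ⟨t1, t2⟩ := hmem m h1 h2 h3
    refine ⟨p1.symm, p2.symm, ?_, ?_, ?_, ?_⟩
    · exact word_ne σ (by omega) (by omega) (by omega)
    · exact word_ne σ (by omega) (by omega) (by omega)
    · exact word_ne σ' (by omega) (by omega) (by omega)
    · exact word_ne σ' (by omega) (by omega) (by omega)
  have hτj : ∀ m, m ≠ i → τ m ≠ j := by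
    intro m hm hc
    apply hm
    have := hρτ m
    rw [hc] at this
    have h2 := hρτ i
    rw [hij] at h2
    rw [← this, h2]
  refine ⟨?_, ?_, ?_, ?_⟩
  · refine count_transport (pkP σ') (pkP σ) ρ τ j i hmem' hmem hτρ hρτ ?_ hNpj hNpi ?_
    · have := hρτ i; rw [hij] at this; exact this
    · intro m h1 h2 h3
      have hρi : ρ m ≠ i := by
        intro hc
        exact h3 (by rw [← hτρ m, hc, hij])
      obtain ⟨hm1, hm2⟩ := hmem' m h1 h2 h3
      have k := key (ρ m) hm1 hm2 hρi
      rw [hτρ m] at k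
      unfold pkP
      obtain ⟨k1, k2, k3, k4, k5, k6⟩ := k
      omega
  · refine count_transport (vlP σ') (vlP σ) ρ τ j i hmem' hmem hτρ hρτ ?_ hNvj hNvi ?_
    · have := hρτ i; rw [hij] at this; exact this
    · intro m h1 h2 h3
      have hρi : ρ m ≠ i := by
        intro hc
        exact h3 (by rw [← hτρ m, hc, hij])
      obtain ⟨hm1, hm2⟩ := hmem' m h1 h2 h3
      have k := key (ρ m) hm1 hm2 hρi
      rw [hτρ m] at k
      unfold vlP
      obtain ⟨k1, k2, k3, k4, k5, k6⟩ := k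
      omega
  · refine count_transport _ _ τ ρ i j hmem hmem' hρτ hτρ hij (by simp) (by simp) ?_
    intro m h1 h2 h3
    have k := key m h1 h2 h3
    obtain ⟨k1, k2, k3, k4, k5, k6⟩ := k
    have := hτj m h3
    unfold ddP
    constructor
    · rintro ⟨⟨a1, a2⟩, -⟩
      exact ⟨⟨by omega, by omega⟩, this⟩
    · rintro ⟨⟨a1, a2⟩, -⟩
      exact ⟨⟨by omega, by omega⟩, h3⟩
  · refine count_transport _ _ τ ρ i j hmem hmem' hρτ hτρ hij (by simp) (by simp) ?_
    intro m h1 h2 h3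
    have k := key m h1 h2 h3
    obtain ⟨k1, k2, k3, k4, k5, k6⟩ := k
    have := hτj m h3
    unfold daP
    constructor
    · rintro ⟨⟨a1, a2⟩, -⟩
      exact ⟨⟨by omega, by omega⟩, this⟩
    · rintro ⟨⟨a1, a2⟩, -⟩
      exact ⟨⟨by omega, by omega⟩, h3⟩

end SPaux

namespace SPaux
variable {n : ℕ}

lemma natInf_eq {s : Set ℕ} {k : ℕ} (hk : k ∈ s) (hmin : ∀ m, m < k → m ∉ s) :
    sInf s = k := by
  refine le_antisymm (Nat.sInf_le hk) ?_
  by_contra h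
  push_neg at h
  exact hmin _ h (Nat.sInf_mem ⟨k, hk⟩)

noncomputable def hopF (σ : SignedPerm n) (i : ℕ) : SignedPerm n × ℕ :=
  if 0 < word σ i then
    (moveL σ i (Nat.findGreatest (fun t => word σ t < word σ i) (i - 1) + 1),
     Nat.findGreatest (fun t => word σ t < word σ i) (i - 1) + 1)
  else
    (moveR σ i (sInf {t | i < t ∧ word σ i < word σ t} - 1),
     sInf {t | i < t ∧ word σ i < word σ t} - 1)

noncomputable def hopG (σ : SignedPerm n) (i : ℕ) : SignedPerm n × ℕ :=
  if 0 < word σ i then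
    (moveR σ i (sInf {t | i < t ∧ word σ t < word σ i} - 1),
     sInf {t | i < t ∧ word σ t < word σ i} - 1)
  else
    (moveL σ i (Nat.findGreatest (fun t => word σ i < word σ t) (i - 1) + 1),
     Nat.findGreatest (fun t => word σ i < word σ t) (i - 1) + 1)

lemma hopF_spec (σ : SignedPerm n) (i : ℕ) (h1 : 0 < σ.toFun 1) (hn0 : 0 < σ.toFun n)
    (hi1 : 1 ≤ i) (hin : i ≤ n) (hdd : ddP σ i) :
    0 < (hopF σ i).1.toFun 1 ∧ 0 < (hopF σ i).1.toFun n ∧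
    desB (hopF σ i).1 + 1 = desB σ ∧ slides (hopF σ i).1 = slides σ ∧
    (1 ≤ (hopF σ i).2 ∧ (hopF σ i).2 ≤ n) ∧ daP (hopF σ i).1 (hopF σ i).2 ∧
    hopG (hopF σ i).1 (hopF σ i).2 = (σ, i) := by
  classical
  have hddu : word σ i < word σ (i - 1) ∧ word σ (i + 1) < word σ i := hdd
  by_cases hx : 0 < word σ i
  · -- positive letter: move left over the run of larger letters
    have hi2 : 2 ≤ i := by
      by_contra hc
      have hie : i = 1 := by omega
      rw [hie] at hddu
      rw [word_zero] at hddu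
      rw [hie] at hx
      omega
    set g := Nat.findGreatest (fun t => word σ t < word σ i) (i - 1) with hgdef
    set j := g + 1 with hjdef
    have hgspec : word σ g < word σ i := by
      have := Nat.findGreatest_spec (P := fun t => word σ t < word σ i)
        (m := 0) (n := i - 1) (by omega)
        (by show word σ 0 < word σ i; rw [word_zero]; exact hx)
      exact this
    have hgle : g ≤ i - 1 := Nat.findGreatest_le _
    have hgne : g ≠ i - 1 := by
      intro hc
      rw [hc] at hgspec
      omega
    have hji : j < i := by omega
    have hj1 : 1 ≤ j := by omega
    have hjn : j ≤ n := by omega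
    have hcond : 1 ≤ j ∧ j < i ∧ i ≤ n := ⟨hj1, hji, hin⟩
    have hrun : ∀ t, j ≤ t → t ≤ i - 1 → word σ i < word σ t := by
      intro t ht1 ht2
      have hnp : ¬ word σ t < word σ i :=
        Nat.findGreatest_is_greatest (P := fun t => word σ t < word σ i)
          (n := i - 1) (k := t) (by omega) (by omega)
      have hne : word σ t ≠ word σ i := word_ne σ (by omega) (by omega) (by omega)
      omega
    have ej : word σ (j - 1) = word σ g := by congr 1
    have wj : word σ i < word σ j := hrun j le_rfl (by omega)
    have hA : word σ (j - 1) < word σ j ↔ word σ (j - 1) < word σ i := by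
      rw [ej]; omega
    have hC : word σ i < word σ j ↔ word σ (j - 1) < word σ j := by
      rw [ej]; omega
    have hB : word σ (i - 1) < word σ (i + 1) ↔ word σ (i - 1) < word σ i := by omega
    have hD : word σ (i + 1) < word σ (i - 1) ↔ word σ (i + 1) < word σ i := by omega
    have W := word_moveL σ hcond
    have hres : hopF σ i = (moveL σ i j, j) := by
      rw [hopF, if_pos hx]
    rw [hres]
    have m0 : word (moveL σ i j) (j - 1) = word σ (j - 1) := by
      rw [W]; congr 1; unfold cycL; split_ifs <;> omega
    have m1 : word (moveL σ i j) j = word σ i := by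
      rw [W]; congr 1; unfold cycL; split_ifs <;> omega
    have m2 : word (moveL σ i j) (j + 1) = word σ j := by
      rw [W]; congr 1; unfold cycL; split_ifs <;> omega
    have hda' : daP (moveL σ i j) j := by
      unfold daP
      rw [m0, m1, m2, ej]
      exact ⟨by omega, wj⟩
    have hNpi : ¬ pkP σ i := by unfold pkP; omega
    have hNvi : ¬ vlP σ i := by unfold vlP; omega
    have hNpj : ¬ pkP (moveL σ i j) j := by
      unfold pkP
      rw [m0, m1, m2, ej]
      omega
    have hNvj : ¬ vlP (moveL σ i j) j := by
      unfold vlP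
      rw [m0, m1, m2, ej]
      omega
    have counts := counts_of_pairs σ (moveL σ i j) (tauL j i) (cycL j i) i j
      (by intro m hm1 hm2 hm3; unfold tauL; split_ifs <;> omega)
      (by intro m hm1 hm2 hm3; unfold cycL; split_ifs <;> omega)
      (fun m => cycL_tauL hji) (fun m => tauL_cycL hji)
      (by unfold tauL; rw [if_pos rfl])
      (fun m hm1 hm2 hm3 => moveL_pairs σ hj1 hji hin hA hC hB hD hm1 hm2 hm3)
      hNpi hNpj hNvi hNvj
    obtain ⟨cpk, cvl, cdd, cda⟩ := counts
    have addd : ddc σ = ((Icc 1 n).filter (fun m => ddP σ m ∧ m ≠ i)).card + 1 :=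
      filter_ne_card_pos (ddP σ) (by simp only [Finset.mem_Icc]; omega) hdd
    have addd' : ddc (moveL σ i j) =
        ((Icc 1 n).filter (fun m => ddP (moveL σ i j) m ∧ m ≠ j)).card :=
      filter_ne_card_neg _ (by unfold ddP; unfold daP at hda'; omega)
    have adda : dac σ = ((Icc 1 n).filter (fun m => daP σ m ∧ m ≠ i)).card :=
      filter_ne_card_neg _ (by unfold daP; omega)
    have adda' : dac (moveL σ i j) =
        ((Icc 1 n).filter (fun m => daP (moveL σ i j) m ∧ m ≠ j)).card + 1 :=
      filter_ne_card_pos _ (by simp only [Finset.mem_Icc]; omega) hda'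
    have hto1' : 0 < (moveL σ i j).toFun 1 := by
      rw [moveL_toFun σ hcond 1]
      by_cases hj1' : j = 1
      · have e : cycL j i 1 = i := by unfold cycL; split_ifs <;> omega
        rw [e, ← word_le σ hin]
        exact hx
      · have e : cycL j i 1 = 1 := by unfold cycL; split_ifs <;> omega
        rw [e]; exact h1
    have hton' : 0 < (moveL σ i j).toFun n := by
      rw [moveL_toFun σ hcond n]
      by_cases hi_n : i = n
      · have e : cycL j i n = i - 1 := by unfold cycL; split_ifs <;> omega
        rw [e, ← word_le σ (by omega)]
        omega
      · have e : cycL j i n = n := by unfold cycL; split_ifs <;> omega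
        rw [e]; exact hn0
    refine ⟨hto1', hton', ?_, ?_, ⟨hj1, hjn⟩, hda', ?_⟩
    · have d1 := desB_eq σ
      have d2 := desB_eq (moveL σ i j)
      have hdd1 : ddc (moveL σ i j) + 1 = ddc σ := by rw [addd, addd', cdd]
      have hvl1 : vlc (moveL σ i j) = vlc σ := cvl
      calc desB (moveL σ i j) + 1 = (ddc (moveL σ i j) + vlc (moveL σ i j)) + 1 := by rw [d2]
        _ = (ddc (moveL σ i j) + 1) + vlc σ := by rw [hvl1]; ring
        _ = ddc σ + vlc σ := by rw [hdd1]
        _ = desB σ := d1.symm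
    · rw [slides_eq_pkc σ h1, slides_eq_pkc (moveL σ i j) hto1', cpk]
    · -- round trip
      have hx' : 0 < word (moveL σ i j) j := by rw [m1]; exact hx
      rw [hopG, if_pos hx']
      have hsinf : sInf {t | j < t ∧ word (moveL σ i j) t < word (moveL σ i j) j} = i + 1 := by
        apply natInf_eq
        · refine ⟨by omega, ?_⟩
          have e : word (moveL σ i j) (i + 1) = word σ (i + 1) := by
            rw [W]; congr 1; unfold cycL; split_ifs <;> omega
          rw [e, m1]
          omega
        · rintro t ht ⟨ht1, ht2⟩
          have e : word (moveL σ i j) t = word σ (t - 1) := by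
            rw [W]; congr 1; unfold cycL; split_ifs <;> omega
          rw [e, m1] at ht2
          have := hrun (t - 1) (by omega) (by omega)
          omega
      rw [hsinf]
      have hii : i + 1 - 1 = i := by omega
      rw [hii]
      have hmv : moveR (moveL σ i j) j i = σ := by
        apply SignedPerm.ext'
        funext m
        rw [moveR_toFun _ ⟨hj1, hji, hin⟩ m, moveL_toFun σ hcond, cycL_cycR hji]
      rw [hmv]
  · -- negative letter: move right over the run of smaller letters
    have hxa := word_abs σ hi1 hin
    have hxneg : word σ i < 0 := by omega
    have hi2 : 2 ≤ i := by
      by_contra hc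
      have hie : i = 1 := by omega
      rw [hie] at hxneg
      rw [word_le σ (by omega)] at hxneg
      omega
    have hi_lt_n : i < n := by
      by_contra hc
      have hie : i = n := by omega
      rw [hie, word_le σ le_rfl] at hxneg
      omega
    set f := sInf {t | i < t ∧ word σ i < word σ t} with hfdef
    have hnmem : n ∈ {t | i < t ∧ word σ i < word σ t} := by
      refine ⟨hi_lt_n, ?_⟩
      rw [word_le σ le_rfl]
      omega
    have hf : i < f ∧ word σ i < word σ f := Nat.sInf_mem ⟨n, hnmem⟩
    have hfn : f ≤ n := Nat.sInf_le hnmem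
    have hmin : ∀ t, i < t → t < f → word σ t < word σ i := by
      intro t ht1 ht2
      have hnm : t ∉ {t | i < t ∧ word σ i < word σ t} := Nat.notMem_of_lt_sInf ht2
      have hne : word σ i ≠ word σ t := word_ne σ (by omega) (by omega) (by omega)
      simp only [Set.mem_setOf_eq] at hnm
      omega
    have hf2 : i + 1 < f := by
      have h1' : f ≠ i + 1 := by
        intro hc
        rw [hc] at hf
        omega
      omega
    set j := f - 1 with hjdef
    have hij : i < j := by omega
    have hjn : j ≤ n := by omega
    have hcond : 1 ≤ i ∧ i < j ∧ j ≤ n := ⟨hi1, hij, hjn⟩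
    have hrun : ∀ t, i < t → t ≤ j → word σ t < word σ i := fun t ht1 ht2 =>
      hmin t ht1 (by omega)
    have ef : word σ (j + 1) = word σ f := by congr 1; omega
    have wj : word σ j < word σ i := hrun j (by omega) le_rfl
    have hA : word σ i < word σ (j + 1) ↔ word σ j < word σ (j + 1) := by rw [ef]; omega
    have hC : word σ i < word σ j ↔ word σ (j + 1) < word σ j := by rw [ef]; omega
    have hB : word σ (i + 1) < word σ (i - 1) ↔ word σ i < word σ (i - 1) := by omega
    have hD : word σ (i - 1) < word σ (i + 1) ↔ word σ i < word σ (i + 1) := by omega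
    have W := word_moveR σ hcond
    have hres : hopF σ i = (moveR σ i j, j) := by
      rw [hopF, if_neg hx]
    rw [hres]
    have m0 : word (moveR σ i j) (j - 1) = word σ j := by
      rw [W]; congr 1; unfold cycR; split_ifs <;> omega
    have m1 : word (moveR σ i j) j = word σ i := by
      rw [W]; congr 1; unfold cycR; split_ifs <;> omega
    have m2 : word (moveR σ i j) (j + 1) = word σ (j + 1) := by
      rw [W]; congr 1; unfold cycR; split_ifs <;> omega
    have hda' : daP (moveR σ i j) j := by
      unfold daP
      rw [m0, m1, m2, ef]
      exact ⟨wj, by omega⟩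
    have hNpi : ¬ pkP σ i := by unfold pkP; omega
    have hNvi : ¬ vlP σ i := by unfold vlP; omega
    have hNpj : ¬ pkP (moveR σ i j) j := by
      unfold pkP
      rw [m0, m1, m2, ef]
      omega
    have hNvj : ¬ vlP (moveR σ i j) j := by
      unfold vlP
      rw [m0, m1, m2, ef]
      omega
    have counts := counts_of_pairs σ (moveR σ i j) (tauR i j) (cycR i j) i j
      (by intro m hm1 hm2 hm3; unfold tauR; split_ifs <;> omega)
      (by intro m hm1 hm2 hm3; unfold cycR; split_ifs <;> omega)
      (fun m => cycR_tauR hij) (fun m => tauR_cycR hij)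
      (by unfold tauR; rw [if_pos rfl])
      (fun m hm1 hm2 hm3 => moveR_pairs σ hi1 hij hjn hA hC hB hD hm1 hm2 hm3)
      hNpi hNpj hNvi hNvj
    obtain ⟨cpk, cvl, cdd, cda⟩ := counts
    have addd : ddc σ = ((Icc 1 n).filter (fun m => ddP σ m ∧ m ≠ i)).card + 1 :=
      filter_ne_card_pos (ddP σ) (by simp only [Finset.mem_Icc]; omega) hdd
    have addd' : ddc (moveR σ i j) =
        ((Icc 1 n).filter (fun m => ddP (moveR σ i j) m ∧ m ≠ j)).card :=
      filter_ne_card_neg _ (by unfold ddP; unfold daP at hda'; omega)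
    have adda : dac σ = ((Icc 1 n).filter (fun m => daP σ m ∧ m ≠ i)).card :=
      filter_ne_card_neg _ (by unfold daP; omega)
    have adda' : dac (moveR σ i j) =
        ((Icc 1 n).filter (fun m => daP (moveR σ i j) m ∧ m ≠ j)).card + 1 :=
      filter_ne_card_pos _ (by simp only [Finset.mem_Icc]; omega) hda'
    have hto1' : 0 < (moveR σ i j).toFun 1 := by
      rw [moveR_toFun σ hcond 1]
      have e : cycR i j 1 = 1 := by unfold cycR; split_ifs <;> omega
      rw [e]; exact h1
    have hton' : 0 < (moveR σ i j).toFun n := by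
      rw [moveR_toFun σ hcond n]
      by_cases hjn' : j = n
      · have e : cycR i j n = i := by unfold cycR; split_ifs <;> omega
        rw [e]
        rw [← word_le σ hin]
        omega
      · have e : cycR i j n = n := by unfold cycR; split_ifs <;> omega
        rw [e]; exact hn0
    refine ⟨hto1', hton', ?_, ?_, ⟨by omega, hjn⟩, hda', ?_⟩
    · have d1 := desB_eq σ
      have d2 := desB_eq (moveR σ i j)
      have hdd1 : ddc (moveR σ i j) + 1 = ddc σ := by rw [addd, addd', cdd]
      have hvl1 : vlc (moveR σ i j) = vlc σ := cvl
      calc desB (moveR σ i j) + 1 = (ddc (moveR σ i j) + vlc (moveR σ i j)) + 1 := by rw [d2]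
        _ = (ddc (moveR σ i j) + 1) + vlc σ := by rw [hvl1]; ring
        _ = ddc σ + vlc σ := by rw [hdd1]
        _ = desB σ := d1.symm
    · rw [slides_eq_pkc σ h1, slides_eq_pkc (moveR σ i j) hto1', cpk]
    · -- round trip
      have hx' : ¬ 0 < word (moveR σ i j) j := by rw [m1]; omega
      rw [hopG, if_neg hx']
      have hfg : Nat.findGreatest (fun t => word (moveR σ i j) j < word (moveR σ i j) t)
          (j - 1) = i - 1 := by
        rw [Nat.findGreatest_eq_iff]
        refine ⟨by omega, ?_, ?_⟩
        · intro _
          have e : word (moveR σ i j) (i - 1) = word σ (i - 1) := by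
            rw [W]; congr 1; unfold cycR; split_ifs <;> omega
          rw [e, m1]
          omega
        · intro t ht1 ht2 hP
          have e : word (moveR σ i j) t = word σ (t + 1) := by
            rw [W]; congr 1; unfold cycR; split_ifs <;> omega
          rw [e, m1] at hP
          have := hrun (t + 1) (by omega) (by omega)
          omega
      rw [hfg]
      have hii : i - 1 + 1 = i := by omega
      rw [hii]
      have hmv : moveL (moveR σ i j) j i = σ := by
        apply SignedPerm.ext'
        funext m
        rw [moveL_toFun _ ⟨hi1, hij, hjn⟩ m, moveR_toFun σ hcond, cycR_cycL hij]
      rw [hmv]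

end SPaux

namespace SPaux
variable {n : ℕ}

lemma hopG_spec (σ : SignedPerm n) (i : ℕ) (h1 : 0 < σ.toFun 1) (hn0 : 0 < σ.toFun n)
    (hi1 : 1 ≤ i) (hin : i ≤ n) (hda : daP σ i) :
    0 < (hopG σ i).1.toFun 1 ∧ 0 < (hopG σ i).1.toFun n ∧
    desB (hopG σ i).1 = desB σ + 1 ∧ slides (hopG σ i).1 = slides σ ∧
    (1 ≤ (hopG σ i).2 ∧ (hopG σ i).2 ≤ n) ∧ ddP (hopG σ i).1 (hopG σ i).2 ∧
    hopF (hopG σ i).1 (hopG σ i).2 = (σ, i) := by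
  classical
  have hdau : word σ (i - 1) < word σ i ∧ word σ i < word σ (i + 1) := hda
  have hia := word_abs σ hi1 hin
  by_cases hx : 0 < word σ i
  · -- positive letter: move right over the run of larger letters
    have hi_lt_n : i < n := by
      by_contra hc
      have hie : i = n := by omega
      have hw := word_gt σ (show n < i + 1 by omega)
      rw [hie] at hdau hia hw
      omega
    set f := sInf {t | i < t ∧ word σ t < word σ i} with hfdef
    have hnmem : n + 1 ∈ {t | i < t ∧ word σ t < word σ i} := by
      refine ⟨by omega, ?_⟩
      rw [word_gt σ (by omega)]
      omega
    have hf : i < f ∧ word σ f < word σ i := Nat.sInf_mem ⟨n + 1, hnmem⟩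
    have hfn : f ≤ n + 1 := Nat.sInf_le hnmem
    have hmin : ∀ t, i < t → t < f → word σ i < word σ t := by
      intro t ht1 ht2
      have hnm : t ∉ {t | i < t ∧ word σ t < word σ i} := Nat.notMem_of_lt_sInf ht2
      have hne : word σ t ≠ word σ i := word_ne σ (by omega) (by omega) (by omega)
      simp only [Set.mem_setOf_eq] at hnm
      omega
    have hf2 : i + 1 < f := by
      have h1' : f ≠ i + 1 := by
        intro hc
        rw [hc] at hf
        omega
      omega
    set j := f - 1 with hjdef
    have hij : i < j := by omega
    have hjn : j ≤ n := by omega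
    have hcond : 1 ≤ i ∧ i < j ∧ j ≤ n := ⟨hi1, hij, hjn⟩
    have hrun : ∀ t, i < t → t ≤ j → word σ i < word σ t := fun t ht1 ht2 =>
      hmin t ht1 (by omega)
    have ef : word σ (j + 1) = word σ f := by congr 1; omega
    have wj : word σ i < word σ j := hrun j (by omega) le_rfl
    have hA : word σ i < word σ (j + 1) ↔ word σ j < word σ (j + 1) := by rw [ef]; omega
    have hC : word σ i < word σ j ↔ word σ (j + 1) < word σ j := by rw [ef]; omega
    have hB : word σ (i + 1) < word σ (i - 1) ↔ word σ i < word σ (i - 1) := by omega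
    have hD : word σ (i - 1) < word σ (i + 1) ↔ word σ i < word σ (i + 1) := by omega
    have W := word_moveR σ hcond
    have hres : hopG σ i = (moveR σ i j, j) := by
      rw [hopG, if_pos hx]
    rw [hres]
    have m0 : word (moveR σ i j) (j - 1) = word σ j := by
      rw [W]; congr 1; unfold cycR; split_ifs <;> omega
    have m1 : word (moveR σ i j) j = word σ i := by
      rw [W]; congr 1; unfold cycR; split_ifs <;> omega
    have m2 : word (moveR σ i j) (j + 1) = word σ (j + 1) := by
      rw [W]; congr 1; unfold cycR; split_ifs <;> omega
    have hdd' : ddP (moveR σ i j) j := by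
      unfold ddP
      rw [m0, m1, m2, ef]
      exact ⟨wj, by omega⟩
    have hNpi : ¬ pkP σ i := by unfold pkP; omega
    have hNvi : ¬ vlP σ i := by unfold vlP; omega
    have hNpj : ¬ pkP (moveR σ i j) j := by
      unfold pkP
      rw [m0, m1, m2, ef]
      omega
    have hNvj : ¬ vlP (moveR σ i j) j := by
      unfold vlP
      rw [m0, m1, m2, ef]
      omega
    have counts := counts_of_pairs σ (moveR σ i j) (tauR i j) (cycR i j) i j
      (by intro m hm1 hm2 hm3; unfold tauR; split_ifs <;> omega)
      (by intro m hm1 hm2 hm3; unfold cycR; split_ifs <;> omega)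
      (fun m => cycR_tauR hij) (fun m => tauR_cycR hij)
      (by unfold tauR; rw [if_pos rfl])
      (fun m hm1 hm2 hm3 => moveR_pairs σ hi1 hij hjn hA hC hB hD hm1 hm2 hm3)
      hNpi hNpj hNvi hNvj
    obtain ⟨cpk, cvl, cdd, cda⟩ := counts
    have adda : dac σ = ((Icc 1 n).filter (fun m => daP σ m ∧ m ≠ i)).card + 1 :=
      filter_ne_card_pos (daP σ) (by simp only [Finset.mem_Icc]; omega) hda
    have adda' : dac (moveR σ i j) =
        ((Icc 1 n).filter (fun m => daP (moveR σ i j) m ∧ m ≠ j)).card :=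
      filter_ne_card_neg _ (by unfold daP; unfold ddP at hdd'; omega)
    have addd : ddc σ = ((Icc 1 n).filter (fun m => ddP σ m ∧ m ≠ i)).card :=
      filter_ne_card_neg _ (by unfold ddP; omega)
    have addd' : ddc (moveR σ i j) =
        ((Icc 1 n).filter (fun m => ddP (moveR σ i j) m ∧ m ≠ j)).card + 1 :=
      filter_ne_card_pos _ (by simp only [Finset.mem_Icc]; omega) hdd'
    have hto1' : 0 < (moveR σ i j).toFun 1 := by
      rw [moveR_toFun σ hcond 1]
      by_cases hi1' : i = 1
      · have e : cycR i j 1 = 2 := by unfold cycR; split_ifs <;> omega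
        rw [e, ← word_le σ (by omega)]
        have l2 : word σ 2 = word σ (i + 1) := by congr 1; omega
        rw [l2]
        omega
      · have e : cycR i j 1 = 1 := by unfold cycR; split_ifs <;> omega
        rw [e]; exact h1
    have hton' : 0 < (moveR σ i j).toFun n := by
      rw [moveR_toFun σ hcond n]
      by_cases hjn' : j = n
      · have e : cycR i j n = i := by unfold cycR; split_ifs <;> omega
        rw [e, ← word_le σ hin]
        exact hx
      · have e : cycR i j n = n := by unfold cycR; split_ifs <;> omega
        rw [e]; exact hn0
    refine ⟨hto1', hton', ?_, ?_, ⟨by omega, hjn⟩, hdd', ?_⟩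
    · have d1 := desB_eq σ
      have d2 := desB_eq (moveR σ i j)
      have hdd1 : ddc (moveR σ i j) = ddc σ + 1 := by rw [addd, addd', cdd]
      have hvl1 : vlc (moveR σ i j) = vlc σ := cvl
      calc desB (moveR σ i j) = ddc (moveR σ i j) + vlc (moveR σ i j) := d2
        _ = (ddc σ + 1) + vlc σ := by rw [hvl1, hdd1]
        _ = (ddc σ + vlc σ) + 1 := by ring
        _ = desB σ + 1 := by rw [d1]
    · rw [slides_eq_pkc σ h1, slides_eq_pkc (moveR σ i j) hto1', cpk]
    · -- round trip
      have hx' : 0 < word (moveR σ i j) j := by rw [m1]; exact hx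
      rw [hopF, if_pos hx']
      have hfg : Nat.findGreatest (fun t => word (moveR σ i j) t < word (moveR σ i j) j)
          (j - 1) = i - 1 := by
        rw [Nat.findGreatest_eq_iff]
        refine ⟨by omega, ?_, ?_⟩
        · intro _
          have e : word (moveR σ i j) (i - 1) = word σ (i - 1) := by
            rw [W]; congr 1; unfold cycR; split_ifs <;> omega
          rw [e, m1]
          omega
        · intro t ht1 ht2 hP
          have e : word (moveR σ i j) t = word σ (t + 1) := by
            rw [W]; congr 1; unfold cycR; split_ifs <;> omega
          rw [e, m1] at hP
          have := hrun (t + 1) (by omega) (by omega)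
          omega
      rw [hfg]
      have hii : i - 1 + 1 = i := by omega
      rw [hii]
      have hmv : moveL (moveR σ i j) j i = σ := by
        apply SignedPerm.ext'
        funext m
        rw [moveL_toFun _ ⟨hi1, hij, hjn⟩ m, moveR_toFun σ hcond, cycR_cycL hij]
      rw [hmv]
  · -- negative letter: move left over the run of smaller letters
    have hxneg : word σ i < 0 := by omega
    have hi2 : 2 ≤ i := by
      by_contra hc
      have hie : i = 1 := by omega
      rw [hie] at hdau
      rw [word_zero] at hdau
      rw [hie] at hxneg
      omega
    have hi_lt_n : i < n := by
      by_contra hc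
      have hie : i = n := by omega
      have hw := word_gt σ (show n < i + 1 by omega)
      rw [hie] at hdau hia hw
      omega
    set g := Nat.findGreatest (fun t => word σ i < word σ t) (i - 1) with hgdef
    set j := g + 1 with hjdef
    have hgspec : word σ i < word σ g := by
      have := Nat.findGreatest_spec (P := fun t => word σ i < word σ t)
        (m := 1) (n := i - 1) (by omega)
        (by show word σ i < word σ 1
            rw [word_le σ (show (1 : ℕ) ≤ n by omega)]; omega)
      exact this
    have hgle : g ≤ i - 1 := Nat.findGreatest_le _
    have hg1 : 1 ≤ g := by
      by_contra hc
      have := Nat.findGreatest_is_greatest (P := fun t => word σ i < word σ t)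
        (n := i - 1) (k := 1) (by omega) (by omega)
      have h1' : word σ i < word σ 1 := by
        rw [word_le σ (show (1 : ℕ) ≤ n by omega)]; omega
      exact this h1'
    have hgne : g ≠ i - 1 := by
      intro hc
      rw [hc] at hgspec
      omega
    have hji : j < i := by omega
    have hj1 : 1 ≤ j := by omega
    have hjn : j ≤ n := by omega
    have hcond : 1 ≤ j ∧ j < i ∧ i ≤ n := ⟨hj1, hji, hin⟩
    have hrun : ∀ t, j ≤ t → t ≤ i - 1 → word σ t < word σ i := by
      intro t ht1 ht2
      have hnp : ¬ word σ i < word σ t :=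
        Nat.findGreatest_is_greatest (P := fun t => word σ i < word σ t)
          (n := i - 1) (k := t) (by omega) (by omega)
      have hne : word σ t ≠ word σ i := word_ne σ (by omega) (by omega) (by omega)
      omega
    have ej : word σ (j - 1) = word σ g := by congr 1
    have wj : word σ j < word σ i := hrun j le_rfl (by omega)
    have hA : word σ (j - 1) < word σ j ↔ word σ (j - 1) < word σ i := by rw [ej]; omega
    have hC : word σ i < word σ j ↔ word σ (j - 1) < word σ j := by rw [ej]; omega
    have hB : word σ (i - 1) < word σ (i + 1) ↔ word σ (i - 1) < word σ i := by omega
    have hD : word σ (i + 1) < word σ (i - 1) ↔ word σ (i + 1) < word σ i := by omega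
    have W := word_moveL σ hcond
    have hres : hopG σ i = (moveL σ i j, j) := by
      rw [hopG, if_neg hx]
    rw [hres]
    have m0 : word (moveL σ i j) (j - 1) = word σ (j - 1) := by
      rw [W]; congr 1; unfold cycL; split_ifs <;> omega
    have m1 : word (moveL σ i j) j = word σ i := by
      rw [W]; congr 1; unfold cycL; split_ifs <;> omega
    have m2 : word (moveL σ i j) (j + 1) = word σ j := by
      rw [W]; congr 1; unfold cycL; split_ifs <;> omega
    have hdd' : ddP (moveL σ i j) j := by
      unfold ddP
      rw [m0, m1, m2, ej]
      exact ⟨by omega, wj⟩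
    have hNpi : ¬ pkP σ i := by unfold pkP; omega
    have hNvi : ¬ vlP σ i := by unfold vlP; omega
    have hNpj : ¬ pkP (moveL σ i j) j := by
      unfold pkP
      rw [m0, m1, m2, ej]
      omega
    have hNvj : ¬ vlP (moveL σ i j) j := by
      unfold vlP
      rw [m0, m1, m2, ej]
      omega
    have counts := counts_of_pairs σ (moveL σ i j) (tauL j i) (cycL j i) i j
      (by intro m hm1 hm2 hm3; unfold tauL; split_ifs <;> omega)
      (by intro m hm1 hm2 hm3; unfold cycL; split_ifs <;> omega)
      (fun m => cycL_tauL hji) (fun m => tauL_cycL hji)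
      (by unfold tauL; rw [if_pos rfl])
      (fun m hm1 hm2 hm3 => moveL_pairs σ hj1 hji hin hA hC hB hD hm1 hm2 hm3)
      hNpi hNpj hNvi hNvj
    obtain ⟨cpk, cvl, cdd, cda⟩ := counts
    have adda : dac σ = ((Icc 1 n).filter (fun m => daP σ m ∧ m ≠ i)).card + 1 :=
      filter_ne_card_pos (daP σ) (by simp only [Finset.mem_Icc]; omega) hda
    have adda' : dac (moveL σ i j) =
        ((Icc 1 n).filter (fun m => daP (moveL σ i j) m ∧ m ≠ j)).card :=
      filter_ne_card_neg _ (by unfold daP; unfold ddP at hdd'; omega)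
    have addd : ddc σ = ((Icc 1 n).filter (fun m => ddP σ m ∧ m ≠ i)).card :=
      filter_ne_card_neg _ (by unfold ddP; omega)
    have addd' : ddc (moveL σ i j) =
        ((Icc 1 n).filter (fun m => ddP (moveL σ i j) m ∧ m ≠ j)).card + 1 :=
      filter_ne_card_pos _ (by simp only [Finset.mem_Icc]; omega) hdd'
    have hto1' : 0 < (moveL σ i j).toFun 1 := by
      rw [moveL_toFun σ hcond 1]
      have e : cycL j i 1 = 1 := by unfold cycL; split_ifs <;> omega
      rw [e]; exact h1
    have hton' : 0 < (moveL σ i j).toFun n := by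
      rw [moveL_toFun σ hcond n]
      have e : cycL j i n = n := by unfold cycL; split_ifs <;> omega
      rw [e]; exact hn0
    refine ⟨hto1', hton', ?_, ?_, ⟨hj1, hjn⟩, hdd', ?_⟩
    · have d1 := desB_eq σ
      have d2 := desB_eq (moveL σ i j)
      have hdd1 : ddc (moveL σ i j) = ddc σ + 1 := by rw [addd, addd', cdd]
      have hvl1 : vlc (moveL σ i j) = vlc σ := cvl
      calc desB (moveL σ i j) = ddc (moveL σ i j) + vlc (moveL σ i j) := d2
        _ = (ddc σ + 1) + vlc σ := by rw [hvl1, hdd1]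
        _ = (ddc σ + vlc σ) + 1 := by ring
        _ = desB σ + 1 := by rw [d1]
    · rw [slides_eq_pkc σ h1, slides_eq_pkc (moveL σ i j) hto1', cpk]
    · -- round trip
      have hx' : ¬ 0 < word (moveL σ i j) j := by rw [m1]; omega
      rw [hopF, if_neg hx']
      have hsinf : sInf {t | j < t ∧ word (moveL σ i j) j < word (moveL σ i j) t} = i + 1 := by
        apply natInf_eq
        · refine ⟨by omega, ?_⟩
          have e : word (moveL σ i j) (i + 1) = word σ (i + 1) := by
            rw [W]; congr 1; unfold cycL; split_ifs <;> omega
          rw [e, m1]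
          omega
        · rintro t ht ⟨ht1, ht2⟩
          have e : word (moveL σ i j) t = word σ (t - 1) := by
            rw [W]; congr 1; unfold cycL; split_ifs <;> omega
          rw [e, m1] at ht2
          have := hrun (t - 1) (by omega) (by omega)
          omega
      rw [hsinf]
      have hii : i + 1 - 1 = i := by omega
      rw [hii]
      have hmv : moveR (moveL σ i j) j i = σ := by
        apply SignedPerm.ext'
        funext m
        rw [moveR_toFun _ ⟨hj1, hji, hin⟩ m, moveL_toFun σ hcond, cycL_cycR hji]
      rw [hmv]

end SPaux

namespace SPaux
variable {n : ℕ}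

instance : Finite (SignedPerm n) := by
  let f : SignedPerm n → (Fin (n + 1) → Finset.Icc (-(n : ℤ)) n) := fun σ m =>
    ⟨σ.toFun m, by
      rcases m with ⟨m, hm⟩
      by_cases h : m ∈ Icc 1 n
      · have := σ.mem_abs m h
        simp only [Finset.mem_Icc] at *
        omega
      · rw [σ.eq_zero m h]
        simp only [Finset.mem_Icc]
        omega⟩
  have hf : Function.Injective f := by
    intro a b h
    apply SignedPerm.ext'
    funext m
    by_cases hm : m ≤ n
    · have := congrFun h ⟨m, by omega⟩
      simpa [f, Subtype.ext_iff] using this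
    · rw [a.eq_zero m (by simp only [Finset.mem_Icc]; omega),
        b.eq_zero m (by simp only [Finset.mem_Icc]; omega)]
  exact Finite.of_injective f hf

lemma nat_card_sigma_const {ι : Type} [Finite ι] (f : ι → Finset ℕ) (c : ℕ)
    (h : ∀ i, (f i).card = c) :
    Nat.card (Σ i, {m : ℕ // m ∈ f i}) = Nat.card ι * c := by
  letI : Fintype ι := Fintype.ofFinite ι
  letI F : ∀ i, Fintype {m : ℕ // m ∈ f i} := fun i => Finset.Subtype.fintype (f i)
  rw [Nat.card_eq_fintype_card, Fintype.card_sigma]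
  have : ∀ i : ι, Fintype.card {m : ℕ // m ∈ f i} = c := by
    intro i
    rw [Fintype.card_coe]
    exact h i
  rw [Finset.sum_congr rfl (fun i _ => this i), Finset.sum_const, smul_eq_mul,
    Nat.card_eq_fintype_card]
  rfl

lemma main_rec (k s : ℕ) (hk : s < k) :
    (k - s) * Nat.card {σ : SignedPerm n //
        0 < σ.toFun 1 ∧ 0 < σ.toFun n ∧ desB σ = k ∧ slides σ = s + 1}
    = ((n - 1 - 2 * s) - (k - 1 - s)) * Nat.card {σ : SignedPerm n //
        0 < σ.toFun 1 ∧ 0 < σ.toFun n ∧ desB σ = k - 1 ∧ slides σ = s + 1} := by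
  classical
  let A := {p : SignedPerm n × ℕ //
    (0 < p.1.toFun 1 ∧ 0 < p.1.toFun n ∧ desB p.1 = k ∧ slides p.1 = s + 1) ∧
    (1 ≤ p.2 ∧ p.2 ≤ n) ∧ ddP p.1 p.2}
  let B := {p : SignedPerm n × ℕ //
    (0 < p.1.toFun 1 ∧ 0 < p.1.toFun n ∧ desB p.1 = k - 1 ∧ slides p.1 = s + 1) ∧
    (1 ≤ p.2 ∧ p.2 ≤ n) ∧ daP p.1 p.2}
  have eA : A ≃ (Σ σ : {σ : SignedPerm n //
      0 < σ.toFun 1 ∧ 0 < σ.toFun n ∧ desB σ = k ∧ slides σ = s + 1},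
      {m : ℕ // m ∈ (Icc 1 n).filter (ddP σ.1)}) := by
    refine ⟨fun p => ⟨⟨p.1.1, p.2.1⟩, ⟨p.1.2,
        Finset.mem_filter.mpr ⟨Finset.mem_Icc.mpr p.2.2.1, p.2.2.2⟩⟩⟩,
      fun q => ⟨(q.1.1, q.2.1), q.1.2,
        Finset.mem_Icc.mp (Finset.mem_filter.mp q.2.2).1,
        (Finset.mem_filter.mp q.2.2).2⟩, fun p => rfl, fun q => rfl⟩
  have eB : B ≃ (Σ σ : {σ : SignedPerm n //
      0 < σ.toFun 1 ∧ 0 < σ.toFun n ∧ desB σ = k - 1 ∧ slides σ = s + 1},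
      {m : ℕ // m ∈ (Icc 1 n).filter (daP σ.1)}) := by
    refine ⟨fun p => ⟨⟨p.1.1, p.2.1⟩, ⟨p.1.2,
        Finset.mem_filter.mpr ⟨Finset.mem_Icc.mpr p.2.2.1, p.2.2.2⟩⟩⟩,
      fun q => ⟨(q.1.1, q.2.1), q.1.2,
        Finset.mem_Icc.mp (Finset.mem_filter.mp q.2.2).1,
        (Finset.mem_filter.mp q.2.2).2⟩, fun p => rfl, fun q => rfl⟩
  have cardA : Nat.card A = Nat.card {σ : SignedPerm n //
      0 < σ.toFun 1 ∧ 0 < σ.toFun n ∧ desB σ = k ∧ slides σ = s + 1} * (k - s) := by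
    rw [Nat.card_congr eA]
    exact nat_card_sigma_const _ _ (fun σ =>
      (class_counts σ.1 σ.2.1 σ.2.2.2.1 σ.2.2.2.2).1)
  have cardB : Nat.card B = Nat.card {σ : SignedPerm n //
      0 < σ.toFun 1 ∧ 0 < σ.toFun n ∧ desB σ = k - 1 ∧ slides σ = s + 1}
        * ((n - 1 - 2 * s) - (k - 1 - s)) := by
    rw [Nat.card_congr eB]
    refine nat_card_sigma_const _ _ (fun σ => ?_)
    have h0 := class_counts σ.1 σ.2.1 σ.2.2.2.1 σ.2.2.2.2
    have h2 := h0.1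
    have h3 := h0.2.1
    have h4 := h0.2.2
    show dac σ.1 = (n - 1 - 2 * s) - (k - 1 - s)
    omega
  have eAB : A ≃ B := by
    refine ⟨fun p => ⟨hopF p.1.1 p.1.2, ?_⟩, fun q => ⟨hopG q.1.1 q.1.2, ?_⟩, ?_, ?_⟩
    · obtain ⟨⟨w1, w2, w3, w4⟩, ⟨hm1, hm2⟩, hdd⟩ := p.2
      obtain ⟨c1, c2, c3, c4, c5, c6, c7⟩ := hopF_spec p.1.1 p.1.2 w1 w2 hm1 hm2 hdd
      exact ⟨⟨c1, c2, by omega, by rw [c4, w4]⟩, c5, c6⟩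
    · obtain ⟨⟨w1, w2, w3, w4⟩, ⟨hm1, hm2⟩, hda⟩ := q.2
      obtain ⟨c1, c2, c3, c4, c5, c6, c7⟩ := hopG_spec q.1.1 q.1.2 w1 w2 hm1 hm2 hda
      exact ⟨⟨c1, c2, by omega, by rw [c4, w4]⟩, c5, c6⟩
    · intro p
      apply Subtype.ext
      obtain ⟨⟨w1, w2, w3, w4⟩, ⟨hm1, hm2⟩, hdd⟩ := p.2
      exact (hopF_spec p.1.1 p.1.2 w1 w2 hm1 hm2 hdd).2.2.2.2.2.2
    · intro q
      apply Subtype.ext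
      obtain ⟨⟨w1, w2, w3, w4⟩, ⟨hm1, hm2⟩, hda⟩ := q.2
      exact (hopG_spec q.1.1 q.1.2 w1 w2 hm1 hm2 hda).2.2.2.2.2.2
  have hAB := Nat.card_congr eAB
  rw [cardA, cardB] at hAB
  rw [mul_comm (k - s), mul_comm ((n - 1 - 2 * s) - (k - 1 - s))]
  exact hAB

end SPaux

/-- `b^{++}(n,k,s) = C(n-1-2s, k-s) ⋅ b^{++}(n,s)`. -/
theorem stmt6 (n k s : ℕ) (hsk : s ≤ k) :
    bPP n k s = Nat.choose (n - 1 - 2 * s) (k - s) * bPP n s s := by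
  induction k, hsk using Nat.le_induction with
  | base =>
    rw [Nat.sub_self, Nat.choose_zero_right, one_mul]
  | succ k hsk IH =>
    have hrec := SPaux.main_rec (n := n) (k + 1) s (by omega)
    simp only [Nat.add_sub_cancel] at hrec
    have hb1 : bPP n (k + 1) s = Nat.card {σ : SignedPerm n //
        0 < σ.toFun 1 ∧ 0 < σ.toFun n ∧ desB σ = k + 1 ∧ slides σ = s + 1} := rfl
    have hb2 : bPP n k s = Nat.card {σ : SignedPerm n //
        0 < σ.toFun 1 ∧ 0 < σ.toFun n ∧ desB σ = k ∧ slides σ = s + 1} := rfl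
    rw [← hb1, ← hb2, IH] at hrec
    have key : (k + 1 - s) * Nat.choose (n - 1 - 2 * s) (k + 1 - s)
        = ((n - 1 - 2 * s) - (k - s)) * Nat.choose (n - 1 - 2 * s) (k - s) := by
      have h := Nat.choose_succ_right_eq (n - 1 - 2 * s) (k - s)
      have e : k + 1 - s = (k - s) + 1 := by omega
      rw [e]
      calc ((k - s) + 1) * Nat.choose (n - 1 - 2 * s) ((k - s) + 1)
          = Nat.choose (n - 1 - 2 * s) ((k - s) + 1) * ((k - s) + 1) := by ring
        _ = Nat.choose (n - 1 - 2 * s) (k - s) * ((n - 1 - 2 * s) - (k - s)) := h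
        _ = ((n - 1 - 2 * s) - (k - s)) * Nat.choose (n - 1 - 2 * s) (k - s) := by ring
    apply Nat.eq_of_mul_eq_mul_left (show 0 < k + 1 - s by omega)
    rw [hrec, ← mul_assoc, ← mul_assoc, key]
end
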